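/- arXiv:1405.3102 — 8 statements merged into one kernel-verified Lean document; each statement's English description precedes it below -/
import Mathlib

section
/- Let G be a group and s,t ∈ G, and let H = ⟨s,t⟩ be the subgroup generated by s and t. Then every right coset ⟨s⟩x with x ∈ H meets every right coset ⟨t⟩y with y ∈ H (that is, for all x,y ∈ H there exist m,n ∈ ℤ with s^m x = t^n y) if and only if every element of H can be written in the form s^m t^n with m,n ∈ ℤ. (This is the statement that the G-graph Φ(⟨s,t⟩,{s,t}) is complete bipartite if and only if every x ∈ ⟨s,t⟩ equals s^m t^n.) -/
/-- The G-graph `Φ(⟨s,t⟩,{s,t})` is complete bipartite (every right coset `⟨s⟩x` with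
`x ∈ ⟨s,t⟩` meets every right coset `⟨t⟩y` with `y ∈ ⟨s,t⟩`) if and only if every element
of `⟨s,t⟩` can be written in the form `s^m * t^n`. -/
theorem completeBipartite_iff {G : Type*} [Group G] (s t : G) :
    (∀ x ∈ Subgroup.closure {s, t}, ∀ y ∈ Subgroup.closure {s, t},
        ∃ m n : ℤ, s ^ m * x = t ^ n * y) ↔
      (∀ x ∈ Subgroup.closure {s, t}, ∃ m n : ℤ, x = s ^ m * t ^ n) := by
  constructor
  · intro h x hx
    obtain ⟨m, n, hmn⟩ := h x hx 1 (Subgroup.one_mem _)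
    exact ⟨-m, n, by rw [zpow_neg, eq_inv_mul_iff_mul_eq, hmn, mul_one]⟩
  · intro h x hx y hy
    obtain ⟨a, b, hab⟩ := h (x * y⁻¹) (mul_mem hx (inv_mem hy))
    refine ⟨-a, b, ?_⟩
    rw [zpow_neg, inv_mul_eq_iff_eq_mul, ← mul_assoc, ← hab, inv_mul_cancel_right]
end

section
/- Let G be an abelian group and s,t ∈ G. Then for all x,y ∈ G such that x·y⁻¹ ∈ ⟨s,t⟩, the right cosets ⟨s⟩x and ⟨t⟩y have nonempty intersection. (This says that every connected component of the abelian G-graph Φ(G,{s,t}) is complete bipartite.) -/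
/-- The right coset `H·x = {h*x : h ∈ H}` of a subgroup `H`. -/
def rcoset {G : Type*} [Group G] (H : Subgroup G) (x : G) : Set G :=
  {g : G | ∃ h ∈ H, g = h * x}

lemma mem_closure_pair {G : Type*} [CommGroup G] (s t g : G)
    (hg : g ∈ Subgroup.closure {s, t}) : ∃ m n : ℤ, g = s ^ m * t ^ n := by
  induction hg using Subgroup.closure_induction with
  | mem z hz =>
    rcases hz with h | h
    · exact ⟨1, 0, by simp [Set.mem_singleton_iff.mp h]⟩
    · exact ⟨0, 1, by simp [Set.mem_singleton_iff.mp h]⟩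
  | one => exact ⟨0, 0, by simp⟩
  | mul a b _ _ ha hb =>
    obtain ⟨m, n, rfl⟩ := ha
    obtain ⟨m', n', rfl⟩ := hb
    exact ⟨m + m', n + n', by rw [zpow_add, zpow_add, mul_mul_mul_comm]⟩
  | inv a _ ha =>
    obtain ⟨m, n, rfl⟩ := ha
    exact ⟨-m, -n, by rw [zpow_neg, zpow_neg, mul_inv]⟩

/-- In an abelian group `G`, if `x * y⁻¹ ∈ ⟨s,t⟩`, then the right cosets `⟨s⟩x` and `⟨t⟩y`
intersect: every connected component of the abelian G-graph `Φ(G,{s,t})` is complete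
bipartite. -/
theorem abelian_components_completeBipartite {G : Type*} [CommGroup G] (s t : G) :
    ∀ x y : G, x * y⁻¹ ∈ Subgroup.closure {s, t} →
      (rcoset (Subgroup.zpowers s) x ∩ rcoset (Subgroup.zpowers t) y).Nonempty := by
  intro x y hxy
  obtain ⟨m, n, h⟩ := mem_closure_pair s t _ hxy
  refine ⟨s ^ (-m) * x, ⟨s ^ (-m), ⟨-m, rfl⟩, rfl⟩, t ^ n, ⟨n, rfl⟩, ?_⟩
  have : x = s ^ m * t ^ n * y := by
    rw [← h]; group
  rw [this]; group
end

section
/- For all positive integers l, m, n, there exist a finite abelian group G and elements s,t ∈ G such that {s,t} generates G, the cardinality of G is m·n·l, the order of s is m·l, the order of t is n·l, and the cardinality of the subgroup ⟨s⟩ ∩ ⟨t⟩ is l. (These data imply that the G-graph Φ(G,{s,t}) is the complete bipartite multigraph K^l_{m,n} with m vertices on one level, n on the other, and every multi-edge of multiplicity l; hence K^l_{m,n} is an abelian G-graph.) -/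
section aux

variable {A : Type*} [AddGroup A]

lemma addOrderOf_eq_of_iff' (x : A) (D : ℕ) (h : ∀ k : ℕ, k • x = 0 ↔ D ∣ k) :
    addOrderOf x = D :=
  Nat.dvd_antisymm (addOrderOf_dvd_of_nsmul_eq_zero ((h D).mpr dvd_rfl))
    ((h _).mp (addOrderOf_nsmul_eq_zero x))

end aux

section main

variable (l m n : ℕ)

abbrev Aa (l m n : ℕ) := ZMod (m * l) × ZMod (n * l)

def ww : Aa l m n := ((m : ZMod (m*l)), (n : ZMod (n*l)))

def Kk : AddSubgroup (Aa l m n) := AddSubgroup.zmultiples (ww l m n)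

lemma zsmul_ww (j : ℤ) :
    j • ww l m n = (((j*m : ℤ) : ZMod (m*l)), ((j*n : ℤ) : ZMod (n*l))) := by
  simp only [ww, Prod.smul_mk, zsmul_eq_mul, Prod.mk.injEq]
  constructor <;> push_cast <;> ring

lemma mem_Kk_iff (x y : ℤ) :
    (((x : ZMod (m*l)), (y : ZMod (n*l))) : Aa l m n) ∈ Kk l m n ↔
      ∃ j : ℤ, (↑(m*l) : ℤ) ∣ x - j * m ∧ (↑(n*l) : ℤ) ∣ y - j * n := by
  simp only [Kk, AddSubgroup.mem_zmultiples_iff, zsmul_ww, Prod.mk.injEq,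
    ZMod.intCast_eq_intCast_iff, Int.ModEq, Int.emod_emod_of_dvd]
  constructor
  · rintro ⟨j, h1, h2⟩
    exact ⟨j, (Int.modEq_iff_dvd.mp h1), (Int.modEq_iff_dvd.mp h2)⟩
  · rintro ⟨j, h1, h2⟩
    exact ⟨j, Int.modEq_iff_dvd.mpr h1, Int.modEq_iff_dvd.mpr h2⟩

end main

section main2

variable {l m n : ℕ}

-- if (n*l) ∣ j*n (coming from second coordinate), then l ∣ j
lemma l_dvd_of (hn : 0 < n) {j : ℤ} (h : (↑(n*l) : ℤ) ∣ 0 - j * n) : (l : ℤ) ∣ j := by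
  rw [zero_sub, dvd_neg] at h
  have h' : (n : ℤ) * l ∣ n * j := by
    push_cast at h
    rwa [mul_comm j (n:ℤ)] at h
  exact (mul_dvd_mul_iff_left (by exact_mod_cast hn.ne' : (n:ℤ) ≠ 0)).mp h'

-- (m*l) ∣ j*m when l ∣ j
lemma ml_dvd_of {j : ℤ} (h : (l : ℤ) ∣ j) : (↑(m*l) : ℤ) ∣ j * m := by
  obtain ⟨c, rfl⟩ := h
  exact ⟨c, by push_cast; ring⟩

-- key iff for s
lemma smem_iff (hm : 0 < m) (hn : 0 < n) (k : ℤ) :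
    (((k : ZMod (m*l)), ((0:ℤ) : ZMod (n*l))) : Aa l m n) ∈ Kk l m n ↔ (↑(m*l) : ℤ) ∣ k := by
  rw [mem_Kk_iff]
  constructor
  · rintro ⟨j, h1, h2⟩
    have hml : (↑(m*l) : ℤ) ∣ j * m := ml_dvd_of (l_dvd_of hn h2)
    have := dvd_add h1 hml
    simpa using this
  · intro h
    exact ⟨0, by simpa using h, by simp⟩

-- key iff for the intersection generator u = (m, 0)
lemma umem_iff (hm : 0 < m) (hn : 0 < n) (k : ℤ) :
    (((k * m : ℤ) : ZMod (m*l)), ((0:ℤ) : ZMod (n*l))) ∈ Kk l m n ↔ (l : ℤ) ∣ k := by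
  rw [mem_Kk_iff]
  constructor
  · rintro ⟨j, h1, h2⟩
    have hml : (↑(m*l) : ℤ) ∣ j * m := ml_dvd_of (l_dvd_of hn h2)
    have hk : (↑(m*l) : ℤ) ∣ k * m := by
      have := dvd_add h1 hml
      simpa using this
    -- m*l ∣ k*m → l ∣ k
    have h' : (m : ℤ) * l ∣ m * k := by push_cast at hk; rwa [mul_comm k (m:ℤ)] at hk
    exact (mul_dvd_mul_iff_left (by exact_mod_cast hm.ne' : (m:ℤ) ≠ 0)).mp h'
  · intro h
    refine ⟨k, by simp, ?_⟩
    obtain ⟨c, rfl⟩ := h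
    exact ⟨-c, by push_cast; ring⟩

end main2

section main3

variable {l m n : ℕ}

lemma tmem_iff (hm : 0 < m) (hn : 0 < n) (k : ℤ) :
    ((((0:ℤ) : ZMod (m*l)), (k : ZMod (n*l))) : Aa l m n) ∈ Kk l m n ↔ (↑(n*l) : ℤ) ∣ k := by
  rw [mem_Kk_iff]
  constructor
  · rintro ⟨j, h1, h2⟩
    have hlj : (l : ℤ) ∣ j := l_dvd_of hm h1
    have hnl : (↑(n*l) : ℤ) ∣ j * n := ml_dvd_of hlj
    have := dvd_add h2 hnl
    simpa using this
  · intro h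
    exact ⟨0, by simp, by simpa using h⟩

lemma addOrderOf_ww (hm : 0 < m) (hn : 0 < n) (hl : 0 < l) :
    addOrderOf (ww l m n) = l := by
  apply addOrderOf_eq_of_iff'
  intro k
  rw [← natCast_zsmul, zsmul_ww, Prod.ext_iff]
  simp only [Prod.fst, Prod.snd, ZMod.intCast_zmod_eq_zero_iff_dvd, Prod.fst_zero, Prod.snd_zero]
  constructor
  · rintro ⟨-, h2⟩
    have hlk : (l : ℤ) ∣ (k : ℤ) := l_dvd_of hn (by simpa using (dvd_neg.mpr h2))
    exact_mod_cast hlk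
  · intro h
    have hlk : (l : ℤ) ∣ (k : ℤ) := by exact_mod_cast h
    exact ⟨ml_dvd_of hlk, ml_dvd_of hlk⟩

end main3

section main4

variable (l m n : ℕ)

abbrev Qq := Aa l m n ⧸ Kk l m n

def sbar : Qq l m n := QuotientAddGroup.mk ((1 : ZMod (m*l)), (0 : ZMod (n*l)))
def tbar : Qq l m n := QuotientAddGroup.mk ((0 : ZMod (m*l)), (1 : ZMod (n*l)))
def ubar : Qq l m n := QuotientAddGroup.mk (((m:ℕ) : ZMod (m*l)), (0 : ZMod (n*l)))

variable {l m n}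

lemma mk_nsmul (x : Aa l m n) (k : ℕ) :
    (QuotientAddGroup.mk (k • x) : Qq l m n) = k • QuotientAddGroup.mk x :=
  map_nsmul (QuotientAddGroup.mk' (Kk l m n)) k x

lemma mk_zsmul (x : Aa l m n) (k : ℤ) :
    (QuotientAddGroup.mk (k • x) : Qq l m n) = k • QuotientAddGroup.mk x :=
  map_zsmul (QuotientAddGroup.mk' (Kk l m n)) k x

lemma addOrderOf_sbar (hm : 0 < m) (hn : 0 < n) : addOrderOf (sbar l m n) = m * l := by
  apply addOrderOf_eq_of_iff'
  intro k
  rw [sbar, ← mk_nsmul, QuotientAddGroup.eq_zero_iff]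
  have h0 : (k • ((1:ZMod (m*l)), (0:ZMod (n*l))) : Aa l m n)
      = (((k:ℤ) : ZMod (m*l)), ((0:ℤ) : ZMod (n*l))) := by
    simp [Prod.ext_iff]
  rw [h0, smem_iff hm hn]
  exact Int.natCast_dvd_natCast

lemma addOrderOf_tbar (hm : 0 < m) (hn : 0 < n) : addOrderOf (tbar l m n) = n * l := by
  apply addOrderOf_eq_of_iff'
  intro k
  rw [tbar, ← mk_nsmul, QuotientAddGroup.eq_zero_iff]
  have h0 : (k • ((0:ZMod (m*l)), (1:ZMod (n*l))) : Aa l m n)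
      = (((0:ℤ) : ZMod (m*l)), ((k:ℤ) : ZMod (n*l))) := by
    simp [Prod.ext_iff]
  rw [h0, tmem_iff hm hn]
  exact Int.natCast_dvd_natCast

lemma addOrderOf_ubar (hm : 0 < m) (hn : 0 < n) : addOrderOf (ubar l m n) = l := by
  apply addOrderOf_eq_of_iff'
  intro k
  rw [ubar, ← mk_nsmul, QuotientAddGroup.eq_zero_iff]
  have h0 : (k • (((m:ℕ):ZMod (m*l)), (0:ZMod (n*l))) : Aa l m n)
      = (((((k:ℤ) * (m:ℤ)) : ℤ) : ZMod (m*l)), ((0:ℤ) : ZMod (n*l))) := by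
    refine Prod.ext ?_ ?_ <;> simp [nsmul_eq_mul] <;> push_cast <;> ring
  rw [h0, umem_iff hm hn]
  exact Int.natCast_dvd_natCast

end main4

section main5

variable {l m n : ℕ}

lemma ubar_mem_s : ubar l m n ∈ AddSubgroup.zmultiples (sbar l m n) := by
  refine ⟨(m : ℤ), ?_⟩
  beta_reduce
  rw [sbar, ← mk_zsmul, ubar]
  congr 1
  refine Prod.ext ?_ ?_ <;> simp [zsmul_eq_mul]

lemma ubar_mem_t : ubar l m n ∈ AddSubgroup.zmultiples (tbar l m n) := by
  refine ⟨-(n : ℤ), ?_⟩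
  beta_reduce
  rw [tbar, ← mk_zsmul, ubar, QuotientAddGroup.eq]
  refine ⟨(1 : ℤ), ?_⟩
  beta_reduce
  rw [zsmul_ww]
  refine Prod.ext ?_ ?_ <;> simp [zsmul_eq_mul] <;> push_cast <;> ring

end main5

section main6

variable {l m n : ℕ}

lemma zsmul_sbar (a : ℤ) : a • sbar l m n
    = QuotientAddGroup.mk ((a : ZMod (m*l)), ((0:ℤ) : ZMod (n*l))) := by
  rw [sbar, ← mk_zsmul]
  congr 1
  refine Prod.ext ?_ ?_ <;> simp [zsmul_eq_mul]

lemma zsmul_tbar (a : ℤ) : a • tbar l m n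
    = QuotientAddGroup.mk (((0:ℤ) : ZMod (m*l)), (a : ZMod (n*l))) := by
  rw [tbar, ← mk_zsmul]
  congr 1
  refine Prod.ext ?_ ?_ <;> simp [zsmul_eq_mul]

lemma zsmul_ubar (a : ℤ) : a • ubar l m n
    = QuotientAddGroup.mk (((a * m : ℤ) : ZMod (m*l)), ((0:ℤ) : ZMod (n*l))) := by
  rw [ubar, ← mk_zsmul]
  congr 1
  refine Prod.ext ?_ ?_ <;> simp [zsmul_eq_mul] <;> push_cast <;> ring

lemma inter_eq (hm : 0 < m) (hn : 0 < n) :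
    AddSubgroup.zmultiples (sbar l m n) ⊓ AddSubgroup.zmultiples (tbar l m n)
      = AddSubgroup.zmultiples (ubar l m n) := by
  refine le_antisymm ?_ (le_inf (AddSubgroup.zmultiples_le_of_mem ubar_mem_s)
    (AddSubgroup.zmultiples_le_of_mem ubar_mem_t))
  rintro x ⟨hxs, hxt⟩
  obtain ⟨a, ha⟩ := AddSubgroup.mem_zmultiples_iff.mp hxs
  obtain ⟨b, hb⟩ := AddSubgroup.mem_zmultiples_iff.mp hxt
  rw [zsmul_sbar] at ha
  rw [zsmul_tbar] at hb
  have hab : (QuotientAddGroup.mk ((a : ZMod (m*l)), ((0:ℤ) : ZMod (n*l))) : Qq l m n)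
      = QuotientAddGroup.mk (((0:ℤ) : ZMod (m*l)), (b : ZMod (n*l))) := ha.trans hb.symm
  rw [QuotientAddGroup.eq] at hab
  have hmem : ((((-a : ℤ)) : ZMod (m*l)), ((b : ℤ) : ZMod (n*l))) ∈ Kk l m n := by
    have heq : ((((-a : ℤ)) : ZMod (m*l)), ((b:ℤ) : ZMod (n*l)))
        = -(((a:ℤ) : ZMod (m*l)), ((0:ℤ) : ZMod (n*l)))
          + (((0:ℤ) : ZMod (m*l)), ((b:ℤ) : ZMod (n*l))) := by
      refine Prod.ext ?_ ?_ <;> simp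
    rw [heq]
    exact hab
  obtain ⟨c, h1, h2⟩ := (mem_Kk_iff l m n (-a) b).mp hmem
  rw [AddSubgroup.mem_zmultiples_iff]
  refine ⟨-c, ?_⟩
  rw [zsmul_ubar, ← ha]
  congr 1
  refine Prod.ext ?_ ?_
  · show ((-c * m : ℤ) : ZMod (m*l)) = ((a : ℤ) : ZMod (m*l))
    rw [ZMod.intCast_eq_intCast_iff, Int.modEq_iff_dvd]
    obtain ⟨e, he⟩ := h1
    exact ⟨-e, by push_cast at he ⊢; linarith⟩
  · rfl

end main6

section main7

variable {l m n : ℕ}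

lemma card_Qq (hl : 0 < l) (hm : 0 < m) (hn : 0 < n) :
    Nat.card (Qq l m n) = m * n * l := by
  haveI : NeZero (m * l) := NeZero.of_pos (mul_pos hm hl)
  haveI : NeZero (n * l) := NeZero.of_pos (mul_pos hn hl)
  have h := AddSubgroup.card_eq_card_quotient_mul_card_addSubgroup (Kk l m n)
  have hA : Nat.card (Aa l m n) = (m * l) * (n * l) := by
    simp [Nat.card_prod, Nat.card_zmod]
  have hK : Nat.card (Kk l m n) = l := by
    rw [Kk, Nat.card_zmultiples, addOrderOf_ww hm hn hl]
  rw [hA, hK] at h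
  have h2 : (m * n * l) * l = Nat.card (Qq l m n) * l := by rw [← h]; ring
  exact (Nat.eq_of_mul_eq_mul_right hl h2).symm

lemma gen_Qq (hl : 0 < l) (hm : 0 < m) (hn : 0 < n) (q : Qq l m n) :
    ∃ a b : ℕ, a • sbar l m n + b • tbar l m n = q := by
  haveI : NeZero (m * l) := NeZero.of_pos (mul_pos hm hl)
  haveI : NeZero (n * l) := NeZero.of_pos (mul_pos hn hl)
  induction q using QuotientAddGroup.induction_on with
  | H x =>
    obtain ⟨x, y⟩ := x
    refine ⟨x.val, y.val, ?_⟩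
    rw [sbar, tbar, ← mk_nsmul, ← mk_nsmul, ← QuotientAddGroup.mk_add]
    congr 1
    refine Prod.ext ?_ ?_ <;>
      simp [nsmul_eq_mul, ZMod.natCast_rightInverse x, ZMod.natCast_rightInverse y]

lemma finite_Qq (hl : 0 < l) (hm : 0 < m) (hn : 0 < n) : Finite (Qq l m n) := by
  haveI : NeZero (m * l) := NeZero.of_pos (mul_pos hm hl)
  haveI : NeZero (n * l) := NeZero.of_pos (mul_pos hn hl)
  infer_instance

end main7

/-- For all positive integers `l, m, n`, there is a finite abelian group `G` generated by
two elements `s, t` with `|G| = m*n*l`, `o(s) = m*l`, `o(t) = n*l` and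
`|⟨s⟩ ∩ ⟨t⟩| = l`.  (These data imply that the G-graph `Φ(G,{s,t})` is the complete
bipartite multigraph `K^l_{m,n}`; hence `K^l_{m,n}` is an abelian G-graph.) -/
theorem Klmn_is_abelian_G_graph (l m n : ℕ) (hl : 0 < l) (hm : 0 < m) (hn : 0 < n) :
    ∃ (G : Type) (_ : CommGroup G) (_ : Finite G) (s t : G),
      Subgroup.closure {s, t} = ⊤ ∧
      Nat.card G = m * n * l ∧
      orderOf s = m * l ∧
      orderOf t = n * l ∧
      Nat.card (Subgroup.zpowers s ⊓ Subgroup.zpowers t : Subgroup G) = l := by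
  haveI := finite_Qq hl hm hn
  refine ⟨Multiplicative (Qq l m n), inferInstance, inferInstance,
    Multiplicative.ofAdd (sbar l m n), Multiplicative.ofAdd (tbar l m n), ?_, ?_, ?_, ?_, ?_⟩
  · rw [Subgroup.eq_top_iff']
    intro x
    obtain ⟨a, b, hab⟩ := gen_Qq hl hm hn (Multiplicative.toAdd x)
    have hx : x = (Multiplicative.ofAdd (sbar l m n)) ^ a
        * (Multiplicative.ofAdd (tbar l m n)) ^ b := by
      rw [← ofAdd_nsmul, ← ofAdd_nsmul, ← ofAdd_add, hab]
      simp
    rw [hx]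
    exact mul_mem (pow_mem (Subgroup.subset_closure (by simp)) a)
      (pow_mem (Subgroup.subset_closure (by simp)) b)
  · rw [Nat.card_congr (@Multiplicative.toAdd (Qq l m n)), card_Qq hl hm hn]
  · rw [orderOf_ofAdd_eq_addOrderOf, addOrderOf_sbar hm hn]
  · rw [orderOf_ofAdd_eq_addOrderOf, addOrderOf_tbar hm hn]
  · have hz : Subgroup.zpowers (Multiplicative.ofAdd (sbar l m n))
        ⊓ Subgroup.zpowers (Multiplicative.ofAdd (tbar l m n))
        = Subgroup.zpowers (Multiplicative.ofAdd (ubar l m n)) := by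
      ext x
      simp only [Subgroup.mem_inf, Subgroup.mem_zpowers_iff]
      have key : Multiplicative.toAdd x ∈
            AddSubgroup.zmultiples (sbar l m n) ⊓ AddSubgroup.zmultiples (tbar l m n)
          ↔ Multiplicative.toAdd x ∈ AddSubgroup.zmultiples (ubar l m n) := by
        rw [inter_eq hm hn]
      simp only [AddSubgroup.mem_inf, AddSubgroup.mem_zmultiples_iff] at key
      constructor
      · rintro ⟨⟨a, ha⟩, ⟨b, hb⟩⟩
        obtain ⟨c, hc⟩ := key.mp ⟨⟨a, by rw [← ha]; simp [← ofAdd_zsmul]⟩,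
          ⟨b, by rw [← hb]; simp [← ofAdd_zsmul]⟩⟩
        exact ⟨c, by rw [← ofAdd_zsmul, hc]; simp⟩
      · rintro ⟨c, hc⟩
        have h' := key.mpr ⟨c, by rw [← hc]; simp [← ofAdd_zsmul]⟩
        obtain ⟨⟨a, ha⟩, ⟨b, hb⟩⟩ := h'
        exact ⟨⟨a, by rw [← ofAdd_zsmul, ha]; simp⟩, ⟨b, by rw [← ofAdd_zsmul, hb]; simp⟩⟩
    rw [hz, Nat.card_zpowers, orderOf_ofAdd_eq_addOrderOf, addOrderOf_ubar hm hn]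
end

section
/- Let G be a group and S ⊆ G a subset. In the coset graph of (G,S), for any s,t ∈ S and x,y ∈ G, the vertices (s,⟨s⟩x) and (t,⟨t⟩y) lie in the same connected component (i.e., are joined by a finite walk) if and only if x·y⁻¹ belongs to the subgroup ⟨S⟩ generated by S. (Hence the connected components of a G-graph are in one-to-one correspondence with the right cosets of ⟨S⟩.) -/
/-- Vertices of the coset graph of `(G,S)`: pairs `(s, C)` with `s ∈ S` and `C` a right
coset of `⟨s⟩` in `G`. -/
def GVert {G : Type*} [Group G] (S : Set G) : Type _ :=
  {p : G × Set G // p.1 ∈ S ∧ ∃ x : G, p.2 = rcoset (Subgroup.zpowers p.1) x}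

/-- The coset graph of `(G,S)`: two distinct vertices `(s,C)` and `(t,D)` are adjacent iff
`C ∩ D ≠ ∅`. -/
def cosetGraph {G : Type*} [Group G] (S : Set G) : SimpleGraph (GVert S) :=
  SimpleGraph.fromRel fun u v => (u.1.2 ∩ v.1.2).Nonempty

namespace CGproof

variable {G : Type*} [Group G] {S : Set G}

noncomputable def rep (v : GVert S) : G := v.2.2.choose

lemma rep_spec (v : GVert S) : v.1.2 = rcoset (Subgroup.zpowers v.1.1) (rep v) :=
  v.2.2.choose_spec

lemma mem_closure_of_mem {v : GVert S} {a : G} (ha : a ∈ v.1.2) :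
    a * (rep v)⁻¹ ∈ Subgroup.closure S := by
  rw [rep_spec] at ha
  obtain ⟨h, hh, rfl⟩ := ha
  simpa using (Subgroup.zpowers_le.2 (Subgroup.subset_closure v.2.1)) hh

lemma adj_key {u v : GVert S} (h : (cosetGraph S).Adj u v) :
    rep u * (rep v)⁻¹ ∈ Subgroup.closure S := by
  rw [cosetGraph, SimpleGraph.fromRel_adj] at h
  obtain ⟨-, ⟨g, hgu, hgv⟩ | ⟨g, hgv, hgu⟩⟩ := h <;>
  · have h1 := mem_closure_of_mem hgu
    have h2 := mem_closure_of_mem hgv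
    have := Subgroup.mul_mem _ (Subgroup.inv_mem _ h1) h2
    simpa [mul_assoc] using this

lemma reach_key {u v : GVert S} (h : (cosetGraph S).Reachable u v) :
    rep u * (rep v)⁻¹ ∈ Subgroup.closure S := by
  obtain ⟨p⟩ := h
  induction p with
  | nil => simpa using (Subgroup.closure S).one_mem
  | cons h p ih =>
      have := Subgroup.mul_mem _ (adj_key h) ih
      simpa [mul_assoc] using this

def vtx (s : G) (hs : s ∈ S) (x : G) : GVert S :=
  ⟨(s, rcoset (Subgroup.zpowers s) x), hs, x, rfl⟩

lemma self_mem_rcoset (s x : G) : x ∈ rcoset (Subgroup.zpowers s) x :=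
  ⟨1, Subgroup.one_mem _, (one_mul x).symm⟩

lemma reach_of_mem {u v : GVert S} (g : G) (hgu : g ∈ u.1.2) (hgv : g ∈ v.1.2) :
    (cosetGraph S).Reachable u v := by
  by_cases h : u = v
  · subst h; rfl
  · exact SimpleGraph.Adj.reachable
      ((SimpleGraph.fromRel_adj _ _ _).2 ⟨h, Or.inl ⟨g, hgu, hgv⟩⟩)

lemma step {s : G} (hs : s ∈ S) {u : G} (hu : u ∈ S) (x : G) :
    (cosetGraph S).Reachable (vtx s hs (u * x)) (vtx s hs x) := by
  have h1 : (cosetGraph S).Reachable (vtx s hs (u * x)) (vtx u hu x) :=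
    reach_of_mem (u * x) (self_mem_rcoset _ _) ⟨u, Subgroup.mem_zpowers u, rfl⟩
  have h2 : (cosetGraph S).Reachable (vtx u hu x) (vtx s hs x) :=
    reach_of_mem x (self_mem_rcoset _ _) (self_mem_rcoset _ _)
  exact h1.trans h2

lemma reach_of_closure {s : G} (hs : s ∈ S) {g : G} (hg : g ∈ Subgroup.closure S) (x : G) :
    (cosetGraph S).Reachable (vtx s hs (g * x)) (vtx s hs x) := by
  induction hg using Subgroup.closure_induction generalizing x with
  | mem u hu => exact step hs hu x
  | one => rw [one_mul]
  | mul a b _ _ iha ihb =>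
      rw [mul_assoc]
      exact (iha (b * x)).trans (ihb x)
  | inv a _ iha =>
      have := (iha (a⁻¹ * x)).symm
      rwa [← mul_assoc, mul_inv_cancel, one_mul] at this

end CGproof

/-- In the coset graph of `(G,S)`, the vertices `(s,⟨s⟩x)` and `(t,⟨t⟩y)` lie in the same
connected component if and only if `x * y⁻¹ ∈ ⟨S⟩`; hence the connected components are in
one-to-one correspondence with the right cosets of `⟨S⟩`. -/
theorem cosetGraph_reachable_iff {G : Type*} [Group G] (S : Set G) (s t : G)
    (hs : s ∈ S) (ht : t ∈ S) (x y : G) :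
    (cosetGraph S).Reachable
        ⟨(s, rcoset (Subgroup.zpowers s) x), hs, x, rfl⟩
        ⟨(t, rcoset (Subgroup.zpowers t) y), ht, y, rfl⟩ ↔
      x * y⁻¹ ∈ Subgroup.closure S := by
  constructor
  · intro h
    set u : GVert S := ⟨(s, rcoset (Subgroup.zpowers s) x), hs, x, rfl⟩ with hu
    set v : GVert S := ⟨(t, rcoset (Subgroup.zpowers t) y), ht, y, rfl⟩ with hv
    have hx : x * (CGproof.rep u)⁻¹ ∈ Subgroup.closure S :=
      CGproof.mem_closure_of_mem (CGproof.self_mem_rcoset s x)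
    have hy : y * (CGproof.rep v)⁻¹ ∈ Subgroup.closure S :=
      CGproof.mem_closure_of_mem (CGproof.self_mem_rcoset t y)
    have hk := CGproof.reach_key h
    have := Subgroup.mul_mem _ (Subgroup.mul_mem _ hx hk) (Subgroup.inv_mem _ hy)
    simpa [mul_assoc] using this
  · intro h
    have h1 : (cosetGraph S).Reachable (CGproof.vtx s hs (x * y⁻¹ * y)) (CGproof.vtx s hs y) :=
      CGproof.reach_of_closure hs h y
    rw [inv_mul_cancel_right] at h1
    exact h1.trans (CGproof.reach_of_mem y (CGproof.self_mem_rcoset _ _)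
      (CGproof.self_mem_rcoset _ _))
end

section
/- Let G be a group generated by two distinct elements s and t with ⟨s⟩ ∩ ⟨t⟩ = {e}, and let Γ be the coset graph of (G,{s,t}). Suppose there exist a group G' and a subset S' ⊆ G' whose elements are pairwise independent such that the incidence graph IΓ is isomorphic to the coset graph of (G',S'). Then there exists a map f : G → G such that f∘f = id, f(e) = e, and for every x ∈ G there exist m,n ∈ ℤ with f(sx) = t^m f(x) and f(tx) = s^n f(x). -/
/-- The incidence graph of a simple graph `Γ`. -/
def incidenceGraph {V : Type*} (Γ : SimpleGraph V) : SimpleGraph (V ⊕ Γ.edgeSet) :=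
  SimpleGraph.fromRel fun x y =>
    ∃ (v : V) (a : Γ.edgeSet), x = Sum.inl v ∧ y = Sum.inr a ∧ v ∈ (a : Sym2 V)



section aux
variable {G : Type*} [Group G]

lemma mem_rcoset_iff {H : Subgroup G} {x y : G} : y ∈ rcoset H x ↔ y * x⁻¹ ∈ H := by
  constructor
  · rintro ⟨h, hh, rfl⟩; simpa using hh
  · intro h; exact ⟨y * x⁻¹, h, by group⟩

lemma mem_rcoset_self (H : Subgroup G) (x : G) : x ∈ rcoset H x :=
  ⟨1, H.one_mem, (one_mul x).symm⟩

lemma rcoset_eq_of_mem {H : Subgroup G} {x y : G} (h : y ∈ rcoset H x) :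
    rcoset H y = rcoset H x := by
  rw [mem_rcoset_iff] at h
  ext g
  rw [mem_rcoset_iff, mem_rcoset_iff]
  constructor
  · intro hg; have := H.mul_mem hg h; simpa [mul_assoc] using this
  · intro hg; have := H.mul_mem hg (H.inv_mem h); simpa [mul_assoc] using this

lemma rcoset_inj {H : Subgroup G} {x y : G} (h : rcoset H x = rcoset H y) : x * y⁻¹ ∈ H := by
  have := mem_rcoset_self H x
  rw [h, mem_rcoset_iff] at this
  exact this

/-- canonical vertex -/
def gv (S : Set G) (c : G) (hc : c ∈ S) (x : G) : GVert S :=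
  ⟨(c, rcoset (Subgroup.zpowers c) x), hc, x, rfl⟩

lemma gv_canon {S : Set G} (p : GVert S) {x : G} (hx : x ∈ p.1.2) :
    p = gv S p.1.1 p.2.1 x := by
  obtain ⟨⟨c, C⟩, hc, x₀, hx₀⟩ := p
  apply Subtype.ext
  show (c, C) = (c, rcoset (Subgroup.zpowers c) x)
  have hC : C = rcoset (Subgroup.zpowers c) x₀ := hx₀
  have hx' : x ∈ rcoset (Subgroup.zpowers c) x₀ := by rw [← hC]; exact hx
  rw [hC, rcoset_eq_of_mem hx']

lemma gv_fst {S : Set G} (c : G) (hc : c ∈ S) (x : G) : (gv S c hc x).1.1 = c := rfl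

lemma gv_eq_gv_iff {S : Set G} {c : G} (hc hc' : c ∈ S) {x y : G} :
    gv S c hc x = gv S c hc' y ↔ x * y⁻¹ ∈ Subgroup.zpowers c := by
  constructor
  · intro h
    have := congrArg (fun p : GVert S => p.1.2) h
    exact rcoset_inj this
  · intro h
    apply Subtype.ext
    dsimp [gv]
    congr 1
    exact rcoset_eq_of_mem (mem_rcoset_iff.2 h)

lemma inter_unique {c d : G} (hcd : Subgroup.zpowers c ⊓ Subgroup.zpowers d = ⊥)
    {x y g g' : G} (h1 : g ∈ rcoset (Subgroup.zpowers c) x)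
    (h2 : g ∈ rcoset (Subgroup.zpowers d) y)
    (h3 : g' ∈ rcoset (Subgroup.zpowers c) x)
    (h4 : g' ∈ rcoset (Subgroup.zpowers d) y) : g = g' := by
  obtain ⟨h, hh, rfl⟩ := h1
  obtain ⟨k, hk, hgk⟩ := h3
  have hc : (h * x) * (k * x)⁻¹ ∈ Subgroup.zpowers c := by
    have := (Subgroup.zpowers c).mul_mem hh ((Subgroup.zpowers c).inv_mem hk)
    simpa [mul_assoc] using this
  have hd : (h * x) * (k * x)⁻¹ ∈ Subgroup.zpowers d := by
    rw [mem_rcoset_iff] at h2 h4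
    rw [← hgk] at *
    have := (Subgroup.zpowers d).mul_mem h2 ((Subgroup.zpowers d).inv_mem h4)
    simpa [mul_assoc] using this
  have : (h * x) * (k * x)⁻¹ ∈ (⊥ : Subgroup G) := by
    rw [← hcd]; exact ⟨hc, hd⟩
  rw [Subgroup.mem_bot] at this
  rw [hgk]
  exact mul_inv_eq_one.mp this

lemma cosetGraph_adj {S : Set G} {u v : GVert S} :
    (cosetGraph S).Adj u v ↔ u ≠ v ∧ (u.1.2 ∩ v.1.2).Nonempty := by
  rw [cosetGraph, SimpleGraph.fromRel_adj]
  rw [Set.inter_comm]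
  tauto

end aux

section aux2
variable {G : Type*} [Group G]

open Sum

-- incidence graph adjacency lemmas
lemma inc_not_adj_inl_inl {V : Type*} {Γ : SimpleGraph V} (u v : V) :
    ¬ (incidenceGraph Γ).Adj (inl u) (inl v) := by
  rw [incidenceGraph, SimpleGraph.fromRel_adj]
  rintro ⟨-, ⟨w, a, h1, h2, -⟩ | ⟨w, a, h1, h2, -⟩⟩ <;> simp at h1 h2

lemma inc_not_adj_inr_inr {V : Type*} {Γ : SimpleGraph V} (e e' : Γ.edgeSet) :
    ¬ (incidenceGraph Γ).Adj (inr e) (inr e') := by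
  rw [incidenceGraph, SimpleGraph.fromRel_adj]
  rintro ⟨-, ⟨w, a, h1, h2, -⟩ | ⟨w, a, h1, h2, -⟩⟩ <;> simp at h1 h2

lemma inc_adj_inr_inl {V : Type*} {Γ : SimpleGraph V} (e : Γ.edgeSet) (v : V) :
    (incidenceGraph Γ).Adj (inr e) (inl v) ↔ v ∈ (e : Sym2 V) := by
  rw [incidenceGraph, SimpleGraph.fromRel_adj]
  constructor
  · rintro ⟨-, ⟨w, a, h1, h2, h3⟩ | ⟨w, a, h1, h2, h3⟩⟩
    · simp at h1
    · rw [inl.injEq] at h1; rw [inr.injEq] at h2; subst h1; subst h2; exact h3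
  · intro h
    exact ⟨by simp, Or.inr ⟨v, e, rfl, rfl, h⟩⟩

-- vertices of the base graph
variable (s t : G)

def avert (g : G) : GVert ({s, t} : Set G) :=
  gv _ s (Set.mem_insert _ _) g

def bvert (g : G) : GVert ({s, t} : Set G) :=
  gv _ t (Set.mem_insert_of_mem _ rfl) g

lemma avert_ne_bvert (hst : s ≠ t) (g g' : G) : avert s t g ≠ bvert s t g' := by
  intro h
  exact hst (congrArg (fun p : GVert ({s,t} : Set G) => p.1.1) h)

lemma avert_adj_bvert (hst : s ≠ t) (g : G) :
    (cosetGraph ({s, t} : Set G)).Adj (avert s t g) (bvert s t g) := by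
  rw [cosetGraph_adj]
  exact ⟨avert_ne_bvert s t hst g g, g, mem_rcoset_self _ g, mem_rcoset_self _ g⟩

variable (hst : s ≠ t)

def edg (g : G) : (cosetGraph ({s, t} : Set G)).edgeSet :=
  ⟨s(avert s t g, bvert s t g), avert_adj_bvert s t hst g⟩

lemma avert_eq_iff {g g' : G} : avert s t g = avert s t g' ↔ g * g'⁻¹ ∈ Subgroup.zpowers s :=
  gv_eq_gv_iff _ _

lemma bvert_eq_iff {g g' : G} : bvert s t g = bvert s t g' ↔ g * g'⁻¹ ∈ Subgroup.zpowers t :=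
  gv_eq_gv_iff _ _

lemma edg_inj (hind : Subgroup.zpowers s ⊓ Subgroup.zpowers t = ⊥) {g g' : G}
    (h : edg s t hst g = edg s t hst g') : g = g' := by
  have h1 : s(avert s t g, bvert s t g) = s(avert s t g', bvert s t g') :=
    congrArg Subtype.val h
  rw [Sym2.eq_iff] at h1
  rcases h1 with ⟨ha, hb⟩ | ⟨ha, hb⟩
  · rw [avert_eq_iff] at ha
    rw [bvert_eq_iff] at hb
    have : g * g'⁻¹ ∈ (⊥ : Subgroup G) := by rw [← hind]; exact ⟨ha, hb⟩
    rw [Subgroup.mem_bot] at this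
    exact mul_inv_eq_one.mp this
  · exact absurd ha (avert_ne_bvert s t hst g g')

lemma edg_surj (hind : Subgroup.zpowers s ⊓ Subgroup.zpowers t = ⊥)
    (e : (cosetGraph ({s, t} : Set G)).edgeSet) : ∃ g, e = edg s t hst g := by
  obtain ⟨E, hE⟩ := e
  induction E using Sym2.inductionOn with
  | hf u v =>
    rw [SimpleGraph.mem_edgeSet, cosetGraph_adj] at hE
    obtain ⟨hne, g, hgu, hgv⟩ := hE
    refine ⟨g, ?_⟩
    have hu := gv_canon u hgu
    have hv := gv_canon v hgv
    have hus : u.1.1 ∈ ({s, t} : Set G) := u.2.1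
    have hvs : v.1.1 ∈ ({s, t} : Set G) := v.2.1
    have key : ∀ (w : GVert ({s,t} : Set G)), w.1.1 = s → w = gv _ w.1.1 w.2.1 g →
        w = avert s t g := by
      intro w hw hwg
      rw [hwg]
      apply Subtype.ext
      show (w.1.1, rcoset (Subgroup.zpowers w.1.1) g) = (s, rcoset (Subgroup.zpowers s) g)
      rw [hw]
    have key' : ∀ (w : GVert ({s,t} : Set G)), w.1.1 = t → w = gv _ w.1.1 w.2.1 g →
        w = bvert s t g := by
      intro w hw hwg
      rw [hwg]
      apply Subtype.ext
      show (w.1.1, rcoset (Subgroup.zpowers w.1.1) g) = (t, rcoset (Subgroup.zpowers t) g)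
      rw [hw]
    have hsame : ∀ (w w' : GVert ({s,t} : Set G)), w.1.1 = w'.1.1 →
        w = gv _ w.1.1 w.2.1 g → w' = gv _ w'.1.1 w'.2.1 g → w = w' := by
      intro w w' h hw hw'
      rw [hw, hw']
      apply Subtype.ext
      show (w.1.1, rcoset (Subgroup.zpowers w.1.1) g) = (w'.1.1, rcoset (Subgroup.zpowers w'.1.1) g)
      rw [h]
    rcases hus with hus | hus <;> rcases hvs with hvs | hvs
    · exact absurd (hsame u v (by rw [hus, hvs]) hu hv) hne
    · apply Subtype.ext
      show s(u, v) = s(avert s t g, bvert s t g)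
      rw [key u hus hu, key' v hvs hv]
    · apply Subtype.ext
      show s(u, v) = s(avert s t g, bvert s t g)
      rw [key v hvs hv, key' u hus hu, Sym2.eq_swap]
    · exact absurd (hsame u v (by rw [hus, hvs]) hu hv) hne

-- neighbors of an edge vertex
lemma edg_adj_iff (g : G) (z : GVert ({s,t} : Set G) ⊕ (cosetGraph ({s,t} : Set G)).edgeSet) :
    (incidenceGraph (cosetGraph ({s,t} : Set G))).Adj (inr (edg s t hst g)) z ↔
      z = inl (avert s t g) ∨ z = inl (bvert s t g) := by
  cases z with
  | inl v =>
    rw [inc_adj_inr_inl]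
    show v ∈ s(avert s t g, bvert s t g) ↔ _
    rw [Sym2.mem_iff]
    constructor
    · rintro (rfl | rfl)
      · exact Or.inl rfl
      · exact Or.inr rfl
    · rintro (h | h) <;> rw [inl.injEq] at h
      · exact Or.inl h
      · exact Or.inr h
  | inr e =>
    simp only [inc_not_adj_inr_inr, false_iff]
    rintro (h | h) <;> simp at h

end aux2

section aux3
variable {G' : Type*} [Group G']

lemma image_rcoset (H : Subgroup G') (x h : G') :
    (· * h) '' rcoset H x = rcoset H (x * h) := by
  ext g
  constructor
  · rintro ⟨d, ⟨k, hk, rfl⟩, rfl⟩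
    exact ⟨k, hk, mul_assoc k x h⟩
  · rintro ⟨k, hk, rfl⟩
    exact ⟨k * x, ⟨k, hk, rfl⟩, mul_assoc k x h⟩

variable (S' : Set G')

def rmulFun (h : G') : GVert S' → GVert S' := fun p =>
  ⟨(p.1.1, (· * h) '' p.1.2), p.2.1, by
    obtain ⟨x, hx⟩ := p.2.2
    exact ⟨x * h, by rw [hx, image_rcoset]⟩⟩

lemma rmulFun_invol {h : G'} (hh : h * h = 1) : Function.Involutive (rmulFun S' h) := by
  intro p
  apply Subtype.ext
  show (p.1.1, (· * h) '' ((· * h) '' p.1.2)) = p.1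
  rw [Set.image_image]
  have : (fun x => x * h * h) = fun x : G' => x := by
    funext x; rw [mul_assoc, hh, mul_one]
  rw [this, Set.image_id']

def rmulIso {h : G'} (hh : h * h = 1) : cosetGraph S' ≃g cosetGraph S' := by
  refine ⟨(rmulFun_invol S' hh).toPerm, ?_⟩
  intro p q
  show (cosetGraph S').Adj (rmulFun S' h p) (rmulFun S' h q) ↔ (cosetGraph S').Adj p q
  rw [cosetGraph_adj, cosetGraph_adj]
  have hinj := (rmulFun_invol S' hh).injective
  constructor
  · rintro ⟨hne, g, hg1, hg2⟩
    refine ⟨fun e => hne (by rw [e]), ?_⟩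
    obtain ⟨d, hd, rfl⟩ := hg1
    obtain ⟨d', hd', he⟩ := hg2
    have hdd : d' = d := mul_right_cancel he
    exact ⟨d, hd, hdd ▸ hd'⟩
  · rintro ⟨hne, g, hg1, hg2⟩
    exact ⟨fun e => hne (hinj e), g * h, ⟨g, hg1, rfl⟩, ⟨g, hg2, rfl⟩⟩

lemma rmulIso_apply {h : G'} (hh : h * h = 1) (p : GVert S') :
    (rmulIso S' hh) p = rmulFun S' h p := rfl

lemma rmulIso_gv {h : G'} (hh : h * h = 1) (c : G') (hc : c ∈ S') (x : G') :
    (rmulIso S' hh) (gv S' c hc x) = gv S' c hc (x * h) := by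
  apply Subtype.ext
  show (c, (· * h) '' rcoset (Subgroup.zpowers c) x) = (c, rcoset (Subgroup.zpowers c) (x * h))
  rw [image_rcoset]

end aux3


section main
open Sum

lemma gv_congr {G : Type*} [Group G] {S : Set G} {c c' : G} (h : c = c')
    (hc : c ∈ S) (hc' : c' ∈ S) (x : G) : gv S c hc x = gv S c' hc' x := by
  subst h; rfl

/-- Necessary condition: if `G = ⟨s,t⟩` with `s ≠ t` independent, and the incidence graph
of `Γ = Φ(G,{s,t})` is a G-graph, then there is an involutive map `f : G → G` fixing `e`
such that for all `x`, `f(sx) = t^m f(x)` and `f(tx) = s^n f(x)` for some `m, n ∈ ℤ`. -/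
theorem incidence_bipartite_necessary {G : Type*} [Group G] (s t : G) (hst : s ≠ t)
    (hgen : Subgroup.closure {s, t} = ⊤)
    (hind : Subgroup.zpowers s ⊓ Subgroup.zpowers t = ⊥)
    (hG : ∃ (G' : Type) (_ : Group G') (S' : Set G'),
      (∀ a ∈ S', ∀ b ∈ S', a ≠ b → Subgroup.zpowers a ⊓ Subgroup.zpowers b = ⊥) ∧
      Nonempty (incidenceGraph (cosetGraph ({s, t} : Set G)) ≃g cosetGraph S')) :
    ∃ f : G → G, f ∘ f = id ∧ f 1 = 1 ∧
      ∀ x : G, ∃ m n : ℤ, f (s * x) = t ^ m * f x ∧ f (t * x) = s ^ n * f x := by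
  obtain ⟨G', hGrp, S', hindep, ⟨ψ⟩⟩ := hG
  letI : Group G' := hGrp
  set Γ := cosetGraph ({s, t} : Set G) with hΓ
  -- the edge-vertex of `g`
  let ε : G → (GVert ({s, t} : Set G) ⊕ Γ.edgeSet) := fun g => inr (edg s t hst g)
  have εinj : ∀ g g', ε g = ε g' → g = g' := by
    intro g g' h
    exact edg_inj s t hst hind (inr_injective h)
  -- images of the three distinguished vertices
  set w₁ := ψ (ε 1) with hw₁def
  set wa := ψ (inl (avert s t 1)) with hwadef
  set wb := ψ (inl (bvert s t 1)) with hwbdef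
  have hadj_a : (cosetGraph S').Adj w₁ wa :=
    ψ.map_rel_iff.mpr ((edg_adj_iff s t hst 1 _).mpr (Or.inl rfl))
  have hadj_b : (cosetGraph S').Adj w₁ wb :=
    ψ.map_rel_iff.mpr ((edg_adj_iff s t hst 1 _).mpr (Or.inr rfl))
  -- all neighbours of `w₁` are `wa` or `wb`
  have key3 : ∀ z, (cosetGraph S').Adj w₁ z → z = wa ∨ z = wb := by
    intro z hz
    have h1 : z = ψ (ψ.symm z) := (ψ.apply_symm_apply z).symm
    rw [h1] at hz
    have h2 := ψ.map_rel_iff.mp hz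
    have h3 := (edg_adj_iff s t hst 1 _).mp h2
    rcases h3 with h3 | h3
    · left; rw [h1, h3, hwadef]
    · right; rw [h1, h3, hwbdef]
  obtain ⟨hne_a, e₀, he₀E, he₀C⟩ := cosetGraph_adj.mp hadj_a
  obtain ⟨hne_b, e₁, he₁E, he₁D⟩ := cosetGraph_adj.mp hadj_b
  have hw1 : w₁ = gv S' w₁.1.1 w₁.2.1 e₀ := gv_canon _ he₀E
  have hw1' : w₁ = gv S' w₁.1.1 w₁.2.1 e₁ := gv_canon _ he₁E
  have hwa : wa = gv S' wa.1.1 wa.2.1 e₀ := gv_canon _ he₀C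
  have hwb : wb = gv S' wb.1.1 wb.2.1 e₁ := gv_canon _ he₁D
  have huv : w₁.1.1 ≠ wa.1.1 := by
    intro h
    apply hne_a
    rw [hw1, hwa]
    rw [gv_congr h w₁.2.1 (h ▸ w₁.2.1) e₀]
  have huw : w₁.1.1 ≠ wb.1.1 := by
    intro h
    apply hne_b
    rw [hw1', hwb]
    rw [gv_congr h w₁.2.1 (h ▸ w₁.2.1) e₁]
  have hanb : avert s t (1:G) ≠ bvert s t 1 := avert_ne_bvert s t hst 1 1
  have hwawb : wa ≠ wb := by
    intro h
    exact hanb (inl_injective (ψ.injective h))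
  -- v = w
  have hvw : wa.1.1 = wb.1.1 := by
    by_contra hvw
    set z₃ : GVert S' := gv S' wb.1.1 wb.2.1 e₀ with hz₃
    have hz₃fst : z₃.1.1 = wb.1.1 := rfl
    have hadj13 : (cosetGraph S').Adj w₁ z₃ := by
      rw [cosetGraph_adj]
      constructor
      · intro h
        have hfst := congrArg (fun p : GVert S' => p.1.1) h
        exact huw hfst
      · refine ⟨e₀, he₀E, mem_rcoset_self _ _⟩
    have hadja3 : (cosetGraph S').Adj wa z₃ := by
      rw [cosetGraph_adj]
      constructor
      · intro h
        have hfst := congrArg (fun p : GVert S' => p.1.1) h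
        exact hvw hfst
      · refine ⟨e₀, he₀C, mem_rcoset_self _ _⟩
    rcases key3 z₃ hadj13 with h | h
    · have hfst := congrArg (fun p : GVert S' => p.1.1) h
      exact hvw hfst.symm
    · rw [h] at hadja3
      have : (incidenceGraph Γ).Adj (inl (avert s t 1)) (inl (bvert s t 1)) := by
        rw [hwadef, hwbdef] at hadja3
        exact ψ.map_rel_iff.mp hadja3
      exact inc_not_adj_inl_inl _ _ this
  -- τ := e₁ e₀⁻¹ ∈ ⟨u⟩, τ ≠ 1, τ² = 1
  set τ := e₁ * e₀⁻¹ with hτdef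
  have hτu : τ ∈ Subgroup.zpowers w₁.1.1 := by
    have h := hw1 ▸ he₁E
    exact mem_rcoset_iff.mp (hw1 ▸ he₁E)
  have hτe : e₁ = τ * e₀ := by rw [hτdef]; group
  have hτ1 : τ ≠ 1 := by
    intro h
    apply hwawb
    rw [hwa, hwb, gv_congr hvw wa.2.1 wb.2.1 e₀]
    rw [gv_eq_gv_iff]
    rw [hτe, h, one_mul]
    have he : e₀ * e₀⁻¹ = 1 := by group
    rw [he]
    exact (Subgroup.zpowers wb.1.1).one_mem
  have hbot : Subgroup.zpowers w₁.1.1 ⊓ Subgroup.zpowers wa.1.1 = ⊥ :=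
    hindep _ w₁.2.1 _ wa.2.1 huv
  have hττ : τ * τ = 1 := by
    set z₂ : GVert S' := gv S' wa.1.1 wa.2.1 (τ * (τ * e₀)) with hz₂
    have hadj12 : (cosetGraph S').Adj w₁ z₂ := by
      rw [cosetGraph_adj]
      constructor
      · intro h
        have hfst := congrArg (fun p : GVert S' => p.1.1) h
        exact huv hfst
      · refine ⟨τ * (τ * e₀), ?_, mem_rcoset_self _ _⟩
        rw [hw1]
        show τ * (τ * e₀) ∈ rcoset (Subgroup.zpowers w₁.1.1) e₀
        rw [mem_rcoset_iff]
        have he : τ * (τ * e₀) * e₀⁻¹ = τ * τ := by group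
        rw [he]
        exact (Subgroup.zpowers w₁.1.1).mul_mem hτu hτu
    rcases key3 z₂ hadj12 with h | h
    · rw [hwa] at h
      rw [hz₂, gv_eq_gv_iff] at h
      have he : τ * (τ * e₀) * e₀⁻¹ = τ * τ := by group
      rw [he] at h
      have hmem : τ * τ ∈ (⊥ : Subgroup G') := by
        rw [← hbot]
        exact ⟨(Subgroup.zpowers w₁.1.1).mul_mem hτu hτu, h⟩
      exact Subgroup.mem_bot.mp hmem
    · exfalso
      rw [hwb, ← gv_congr hvw wa.2.1 wb.2.1 e₁] at h
      rw [hz₂, gv_eq_gv_iff] at h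
      rw [hτe] at h
      have he : τ * (τ * e₀) * (τ * e₀)⁻¹ = τ := by group
      rw [he] at h
      have hmem : τ ∈ (⊥ : Subgroup G') := by
        rw [← hbot]
        exact ⟨hτu, h⟩
      exact hτ1 (Subgroup.mem_bot.mp hmem)
  -- the involution by right translation
  set h₀ := e₀⁻¹ * τ * e₀ with hh₀def
  have hh₀ : h₀ * h₀ = 1 := by
    have : h₀ * h₀ = e₀⁻¹ * (τ * τ) * e₀ := by rw [hh₀def]; group
    rw [this, hττ]; group
  set ρ := rmulIso S' hh₀ with hρdef
  have hρinvol : ∀ p, ρ (ρ p) = p := fun p => (rmulFun_invol S' hh₀) p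
  have he₀h : e₀ * h₀ = τ * e₀ := by rw [hh₀def]; group
  have hρw1 : ρ w₁ = w₁ := by
    have h1 : ρ w₁ = gv S' w₁.1.1 w₁.2.1 (e₀ * h₀) := by
      conv_lhs => rw [hw1]
      exact rmulIso_gv S' hh₀ _ _ e₀
    rw [h1, he₀h]
    conv_rhs => rw [hw1]
    rw [gv_eq_gv_iff]
    have he : τ * e₀ * e₀⁻¹ = τ := by group
    rw [he]; exact hτu
  have hρwa : ρ wa = wb := by
    have h1 : ρ wa = gv S' wa.1.1 wa.2.1 (e₀ * h₀) := by
      conv_lhs => rw [hwa]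
      exact rmulIso_gv S' hh₀ _ _ e₀
    rw [h1, he₀h]
    rw [hwb, ← gv_congr hvw wa.2.1 wb.2.1 e₁, gv_eq_gv_iff, hτe]
    have he : τ * e₀ * (τ * e₀)⁻¹ = 1 := by group
    rw [he]
    exact (Subgroup.zpowers wa.1.1).one_mem
  have hρwb : ρ wb = wa := by rw [← hρwa, hρinvol]
  -- the involution of the incidence graph
  set Φ : incidenceGraph Γ ≃g incidenceGraph Γ := (ψ.trans ρ).trans ψ.symm with hΦdef
  have hΦap : ∀ z, Φ z = ψ.symm (ρ (ψ z)) := fun _ => rfl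
  have hΦinvol : ∀ z, Φ (Φ z) = z := by
    intro z
    rw [hΦap, hΦap, ψ.apply_symm_apply, hρinvol, ψ.symm_apply_apply]
  have hΦ1 : Φ (ε 1) = ε 1 := by
    rw [hΦap, ← hw₁def, hρw1, hw₁def, ψ.symm_apply_apply]
  have hΦa : Φ (inl (avert s t 1)) = inl (bvert s t 1) := by
    rw [hΦap, ← hwadef, hρwa, hwbdef, ψ.symm_apply_apply]
  have hΦb : Φ (inl (bvert s t 1)) = inl (avert s t 1) := by
    rw [hΦap, ← hwbdef, hρwb, hwadef, ψ.symm_apply_apply]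
  -- the step lemmas
  have stepA : ∀ y fy, (Φ (ε y) = ε fy ∧ Φ (inl (avert s t y)) = inl (bvert s t fy) ∧
      Φ (inl (bvert s t y)) = inl (avert s t fy)) → ∀ y', avert s t y' = avert s t y →
      ∃ g, Φ (ε y') = ε g ∧ Φ (inl (avert s t y')) = inl (bvert s t g) ∧
        Φ (inl (bvert s t y')) = inl (avert s t g) := by
    intro y fy ⟨h1, h2, h3⟩ y' hay
    have hA : (incidenceGraph Γ).Adj (ε y') (inl (avert s t y')) :=
      (edg_adj_iff s t hst y' _).mpr (Or.inl rfl)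
    have hA2 : (incidenceGraph Γ).Adj (Φ (ε y')) (inl (bvert s t fy)) := by
      have := Φ.map_rel_iff.mpr hA
      rwa [hay, h2] at this
    cases hz : Φ (ε y') with
    | inl p => rw [hz] at hA2; exact absurd hA2 (inc_not_adj_inl_inl _ _)
    | inr e =>
      rw [hz] at hA2
      have hmem : bvert s t fy ∈ (e : Sym2 _) := (inc_adj_inr_inl _ _).mp hA2
      obtain ⟨g, hg⟩ := edg_surj s t hst hind e
      rw [hg] at hmem
      have hbv : bvert s t fy = bvert s t g := by
        rcases Sym2.mem_iff.mp hmem with h | h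
        · exact absurd h.symm (avert_ne_bvert s t hst g fy)
        · exact h
      refine ⟨g, by rw [hg], ?_, ?_⟩
      · rw [hay, h2, hbv]
      · have hB : (incidenceGraph Γ).Adj (ε y') (inl (bvert s t y')) :=
          (edg_adj_iff s t hst y' _).mpr (Or.inr rfl)
        have hB2 := Φ.map_rel_iff.mpr hB
        rw [hz, hg] at hB2
        rcases (edg_adj_iff s t hst g _).mp hB2 with h | h
        · exact h
        · exfalso
          have h2' : Φ (inl (avert s t y')) = inl (bvert s t g) := by rw [hay, h2, hbv]
          have := Φ.injective (h.trans h2'.symm)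
          exact (avert_ne_bvert s t hst y' y') (inl_injective this).symm
  have stepB : ∀ y fy, (Φ (ε y) = ε fy ∧ Φ (inl (avert s t y)) = inl (bvert s t fy) ∧
      Φ (inl (bvert s t y)) = inl (avert s t fy)) → ∀ y', bvert s t y' = bvert s t y →
      ∃ g, Φ (ε y') = ε g ∧ Φ (inl (avert s t y')) = inl (bvert s t g) ∧
        Φ (inl (bvert s t y')) = inl (avert s t g) := by
    intro y fy ⟨h1, h2, h3⟩ y' hby
    have hA : (incidenceGraph Γ).Adj (ε y') (inl (bvert s t y')) :=
      (edg_adj_iff s t hst y' _).mpr (Or.inr rfl)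
    have hA2 : (incidenceGraph Γ).Adj (Φ (ε y')) (inl (avert s t fy)) := by
      have := Φ.map_rel_iff.mpr hA
      rwa [hby, h3] at this
    cases hz : Φ (ε y') with
    | inl p => rw [hz] at hA2; exact absurd hA2 (inc_not_adj_inl_inl _ _)
    | inr e =>
      rw [hz] at hA2
      have hmem : avert s t fy ∈ (e : Sym2 _) := (inc_adj_inr_inl _ _).mp hA2
      obtain ⟨g, hg⟩ := edg_surj s t hst hind e
      rw [hg] at hmem
      have hav : avert s t fy = avert s t g := by
        rcases Sym2.mem_iff.mp hmem with h | h
        · exact h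
        · exact absurd h (avert_ne_bvert s t hst fy g)
      have h3' : Φ (inl (bvert s t y')) = inl (avert s t g) := by rw [hby, h3, hav]
      refine ⟨g, by rw [hg], ?_, h3'⟩
      have hB : (incidenceGraph Γ).Adj (ε y') (inl (avert s t y')) :=
        (edg_adj_iff s t hst y' _).mpr (Or.inl rfl)
      have hB2 := Φ.map_rel_iff.mpr hB
      rw [hz, hg] at hB2
      rcases (edg_adj_iff s t hst g _).mp hB2 with h | h
      · exfalso
        have := Φ.injective (h.trans h3'.symm)
        exact (avert_ne_bvert s t hst y' y') (inl_injective this)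
      · exact h
  -- every group element satisfies the invariant
  have hPall : ∀ x : G, ∃ g, Φ (ε x) = ε g ∧ Φ (inl (avert s t x)) = inl (bvert s t g) ∧
      Φ (inl (bvert s t x)) = inl (avert s t g) := by
    intro x
    have hx : x ∈ Subgroup.closure ({s, t} : Set G) := by rw [hgen]; trivial
    induction hx using Subgroup.closure_induction_left with
    | one => exact ⟨1, hΦ1, hΦa, hΦb⟩
    | mul_left c hc y hy ih =>
      obtain ⟨fy, hfy⟩ := ih
      rcases hc with hc | hc
      · subst hc
        refine stepA y fy hfy (c * y) ?_
        rw [avert_eq_iff]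
        have : c * y * y⁻¹ = c := by group
        rw [this]; exact Subgroup.mem_zpowers c
      · rw [Set.mem_singleton_iff] at hc
        subst hc
        refine stepB y fy hfy (c * y) ?_
        rw [bvert_eq_iff]
        have : c * y * y⁻¹ = c := by group
        rw [this]; exact Subgroup.mem_zpowers c
    | inv_mul_cancel c hc y hy ih =>
      obtain ⟨fy, hfy⟩ := ih
      rcases hc with hc | hc
      · subst hc
        refine stepA y fy hfy (c⁻¹ * y) ?_
        rw [avert_eq_iff]
        have : c⁻¹ * y * y⁻¹ = c⁻¹ := by group
        rw [this]; exact (Subgroup.zpowers c).inv_mem (Subgroup.mem_zpowers c)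
      · rw [Set.mem_singleton_iff] at hc
        subst hc
        refine stepB y fy hfy (c⁻¹ * y) ?_
        rw [bvert_eq_iff]
        have : c⁻¹ * y * y⁻¹ = c⁻¹ := by group
        rw [this]; exact (Subgroup.zpowers c).inv_mem (Subgroup.mem_zpowers c)
  -- define f and conclude
  choose f hf1 hf2 hf3 using hPall
  refine ⟨f, ?_, ?_, ?_⟩
  · funext x
    show f (f x) = x
    have h3 : Φ (Φ (ε x)) = ε (f (f x)) := by rw [hf1 x, hf1 (f x)]
    rw [hΦinvol] at h3
    exact (εinj _ _ h3).symm
  · have h1 := hf1 1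
    rw [hΦ1] at h1
    exact (εinj _ _ h1).symm
  · intro x
    have hax : avert s t (s * x) = avert s t x := by
      rw [avert_eq_iff]
      have hxx : s * x * x⁻¹ = s := by group
      rw [hxx]; exact Subgroup.mem_zpowers s
    have h1 := hf2 (s * x)
    rw [hax, hf2 x] at h1
    have hb := inl_injective h1
    rw [bvert_eq_iff] at hb
    obtain ⟨m, hm⟩ := Subgroup.mem_zpowers_iff.mp hb
    have hbx : bvert s t (t * x) = bvert s t x := by
      rw [bvert_eq_iff]
      have hxx : t * x * x⁻¹ = t := by group
      rw [hxx]; exact Subgroup.mem_zpowers t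
    have h1' := hf3 (t * x)
    rw [hbx, hf3 x] at h1'
    have ha := inl_injective h1'
    rw [avert_eq_iff] at ha
    obtain ⟨n, hn⟩ := Subgroup.mem_zpowers_iff.mp ha
    refine ⟨-m, -n, ?_, ?_⟩
    · rw [zpow_neg, hm]; group
    · rw [zpow_neg, hn]; group

end main
end

section
/- Let G be a group generated by two distinct elements s and t with ⟨s⟩ ∩ ⟨t⟩ = {e}, and let Γ be the coset graph of (G,{s,t}). Suppose there exists a group homomorphism f : G → G such that f∘f = id and for every x ∈ G there exist m,n ∈ ℤ with f(sx) = t^m f(x) and f(tx) = s^n f(x). Then there exist a group G' and a subset S' ⊆ G' whose elements are pairwise independent such that the incidence graph IΓ is isomorphic to the coset graph of (G',S'); i.e., IΓ is a G-graph. -/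
namespace IBS
open Subgroup

variable {G : Type*} [Group G]

lemma mem_rcoset_self (H : Subgroup G) (x : G) : x ∈ rcoset H x :=
  ⟨1, H.one_mem, (one_mul x).symm⟩

lemma rcoset_eq_of_mem {H : Subgroup G} {x g : G} (hg : g ∈ rcoset H x) :
    rcoset H x = rcoset H g := by
  obtain ⟨h0, h0H, rfl⟩ := hg
  ext y
  constructor
  · rintro ⟨h, hH, rfl⟩
    exact ⟨h * h0⁻¹, mul_mem hH (inv_mem h0H), by group⟩
  · rintro ⟨h, hH, rfl⟩
    exact ⟨h * h0, mul_mem hH h0H, by group⟩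

lemma rcoset_eq_of_inter {H : Subgroup G} {x y : G}
    (h : (rcoset H x ∩ rcoset H y).Nonempty) : rcoset H x = rcoset H y := by
  obtain ⟨g, hg1, hg2⟩ := h
  rw [rcoset_eq_of_mem hg1, rcoset_eq_of_mem hg2]

lemma cosetGraph_adj {S : Set G} {v w : GVert S} :
    (cosetGraph S).Adj v w ↔ v ≠ w ∧ (v.1.2 ∩ w.1.2).Nonempty := by
  unfold cosetGraph
  rw [SimpleGraph.fromRel_adj, Set.inter_comm]
  tauto

lemma gvert_ext {S : Set G} {v w : GVert S} (h1 : v.1.1 = w.1.1) (h2 : v.1.2 = w.1.2) :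
    v = w := Subtype.ext (Prod.ext h1 h2)

variable (s t : G)

def vS (g : G) : GVert ({s, t} : Set G) :=
  ⟨(s, rcoset (zpowers s) g), Or.inl rfl, g, rfl⟩

def vT (g : G) : GVert ({s, t} : Set G) :=
  ⟨(t, rcoset (zpowers t) g), Or.inr rfl, g, rfl⟩

variable {s t}

lemma unique_common (hind : ∀ x : G, x ∈ zpowers s → x ∈ zpowers t → x = 1) {x g : G}
    (h1 : x ∈ rcoset (zpowers s) g) (h2 : x ∈ rcoset (zpowers t) g) : x = g := by
  obtain ⟨h1', hm1, rfl⟩ := h1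
  obtain ⟨h2', hm2, he⟩ := h2
  have : h1' = h2' := (mul_right_cancel he.symm).symm
  have h1one : h1' = 1 := hind _ hm1 (this ▸ hm2)
  rw [h1one, one_mul]

lemma edge_form (hst : s ≠ t) (hind : ∀ x : G, x ∈ zpowers s → x ∈ zpowers t → x = 1)
    {e : Sym2 (GVert ({s, t} : Set G))} (he : e ∈ (cosetGraph ({s, t} : Set G)).edgeSet) :
    ∃ g : G, e = s(vS s t g, vT s t g) := by
  induction e using Sym2.ind with
  | _ v w =>
    rw [SimpleGraph.mem_edgeSet, cosetGraph_adj] at he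
    obtain ⟨hvw, g, hgv, hgw⟩ := he
    have hsplit : ∀ u : GVert ({s, t} : Set G), g ∈ u.1.2 →
        u = vS s t g ∨ u = vT s t g := by
      intro u hgu
      obtain ⟨hu, x, hx⟩ := u.2
      rcases (show u.1.1 = s ∨ u.1.1 = t by simpa [Set.mem_insert_iff] using hu) with h | h
      · left
        refine gvert_ext h ?_
        show u.1.2 = rcoset (zpowers s) g
        rw [hx, h] at hgu ⊢
        exact rcoset_eq_of_mem hgu
      · right
        refine gvert_ext h ?_
        show u.1.2 = rcoset (zpowers t) g
        rw [hx, h] at hgu ⊢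
        exact rcoset_eq_of_mem hgu
    rcases hsplit v hgv with hv | hv <;> rcases hsplit w hgw with hw | hw
    · exact absurd (hv.trans hw.symm) hvw
    · exact ⟨g, by rw [hv, hw]⟩
    · exact ⟨g, by rw [hv, hw, Sym2.eq_swap]⟩
    · exact absurd (hv.trans hw.symm) hvw

lemma vS_ne_vT (hst : s ≠ t) (g g' : G) : vS s t g ≠ vT s t g' := by
  intro h
  exact hst (congrArg (fun v : GVert ({s,t} : Set G) => v.1.1) h)

lemma vS_eq_iff {g g' : G} : vS s t g = vS s t g' ↔ g' ∈ rcoset (zpowers s) g := by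
  constructor
  · intro h
    have : rcoset (zpowers s) g = rcoset (zpowers s) g' :=
      congrArg (fun v : GVert ({s,t} : Set G) => v.1.2) h
    rw [this]; exact mem_rcoset_self _ _
  · intro h
    exact gvert_ext rfl (rcoset_eq_of_mem h)

lemma vT_eq_iff {g g' : G} : vT s t g = vT s t g' ↔ g' ∈ rcoset (zpowers t) g := by
  constructor
  · intro h
    have : rcoset (zpowers t) g = rcoset (zpowers t) g' :=
      congrArg (fun v : GVert ({s,t} : Set G) => v.1.2) h
    rw [this]; exact mem_rcoset_self _ _
  · intro h
    exact gvert_ext rfl (rcoset_eq_of_mem h)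

lemma edge_mem (hst : s ≠ t) (g : G) : s(vS s t g, vT s t g) ∈ (cosetGraph ({s, t} : Set G)).edgeSet := by
  rw [SimpleGraph.mem_edgeSet, cosetGraph_adj]
  refine ⟨vS_ne_vT hst _ _, g, mem_rcoset_self _ _, mem_rcoset_self _ _⟩

abbrev C2 : Type := Multiplicative (ZMod 2)

def g1 : C2 := Multiplicative.ofAdd 1

lemma c2_cases (ε : C2) : ε = 1 ∨ ε = g1 := by
  have : ∀ z : ZMod 2, z = 0 ∨ z = 1 := by decide
  rcases this (Multiplicative.toAdd ε) with h | h
  · left; exact h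
  · right; exact h

lemma g1_ne_one : g1 ≠ (1 : C2) := by decide

lemma g1_mul_g1 : g1 * g1 = (1 : C2) := by decide

def Finv (f : G →* G) (hfi : ∀ x : G, f (f x) = x) : MulAut G :=
  { toFun := f, invFun := f, left_inv := hfi, right_inv := hfi, map_mul' := f.map_mul }

def phifun (f : G →* G) (hfi : ∀ x : G, f (f x) = x) : C2 → MulAut G :=
  fun ε => if Multiplicative.toAdd ε = 0 then 1 else Finv f hfi

lemma phifun_one (f : G →* G) (hfi : ∀ x : G, f (f x) = x) : phifun f hfi 1 = 1 :=
  if_pos rfl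

lemma phifun_g1 (f : G →* G) (hfi : ∀ x : G, f (f x) = x) : phifun f hfi g1 = Finv f hfi :=
  if_neg (by decide)

def phi (f : G →* G) (hfi : ∀ x : G, f (f x) = x) : C2 →* MulAut G where
  toFun := phifun f hfi
  map_one' := phifun_one f hfi
  map_mul' x y := by
    have hFF : Finv f hfi * Finv f hfi = 1 := by
      ext g
      exact hfi g
    show phifun f hfi (x * y) = phifun f hfi x * phifun f hfi y
    rcases c2_cases x with rfl | rfl <;> rcases c2_cases y with rfl | rfl
    · rw [one_mul, phifun_one, mul_one]
    · rw [one_mul, phifun_one, one_mul]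
    · rw [mul_one, phifun_one, mul_one]
    · rw [g1_mul_g1, phifun_one, phifun_g1]
      exact hFF.symm

lemma phi_one_apply (f : G →* G) (hfi : ∀ x : G, f (f x) = x) (x : G) :
    phi f hfi 1 x = x := by
  show phifun f hfi 1 x = x
  rw [phifun_one]
  rfl

lemma phi_g1_apply (f : G →* G) (hfi : ∀ x : G, f (f x) = x) (x : G) :
    phi f hfi g1 x = f x := by
  show phifun f hfi g1 x = f x
  rw [phifun_g1]
  rfl

abbrev G2 (f : G →* G) (hfi : ∀ x : G, f (f x) = x) : Type _ :=
  SemidirectProduct G C2 (phi f hfi)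

def uu (f : G →* G) (hfi : ∀ x : G, f (f x) = x) (s : G) : G2 f hfi :=
  SemidirectProduct.inl s

def sg (f : G →* G) (hfi : ∀ x : G, f (f x) = x) : G2 f hfi :=
  SemidirectProduct.inr g1

lemma mul_mk (f : G →* G) (hfi : ∀ x : G, f (f x) = x) (a : G2 f hfi) (x : G) (ε : C2) :
    a * ⟨x, ε⟩ = ⟨a.left * phi f hfi a.right x, a.right * ε⟩ := rfl

lemma uu_zpow (f : G →* G) (hfi : ∀ x : G, f (f x) = x) (s : G) (k : ℤ) :
    (uu f hfi s) ^ k = SemidirectProduct.inl (s ^ k) :=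
  (map_zpow SemidirectProduct.inl s k).symm

lemma sg_sq (f : G →* G) (hfi : ∀ x : G, f (f x) = x) : sg f hfi * sg f hfi = 1 := by
  unfold sg
  rw [← map_mul, g1_mul_g1, map_one]

lemma mem_zpowers_sg (f : G →* G) (hfi : ∀ x : G, f (f x) = x) {x : G2 f hfi} :
    x ∈ zpowers (sg f hfi) ↔ x = 1 ∨ x = sg f hfi := by
  constructor
  · intro hx
    obtain ⟨k, hk⟩ := mem_zpowers_iff.mp hx
    rw [← hk]
    have h2 : (sg f hfi) ^ (2 : ℤ) = 1 := by
      rw [show (2 : ℤ) = 1 + 1 from rfl, zpow_add, zpow_one, sg_sq]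
    have hk : (sg f hfi) ^ k = (sg f hfi) ^ (k % 2) := by
      conv_lhs => rw [← Int.mul_ediv_add_emod k 2]
      rw [zpow_add, zpow_mul, h2, one_zpow, one_mul]
    have hm : k % 2 = 0 ∨ k % 2 = 1 := by omega
    rcases hm with h | h
    · left; rw [hk, h, zpow_zero]
    · right; rw [hk, h, zpow_one]
  · rintro (rfl | rfl)
    · exact one_mem _
    · exact mem_zpowers _

lemma rcoset_uu (f : G →* G) (hfi : ∀ x : G, f (f x) = x) (s x : G) (ε : C2) :
    rcoset (zpowers (uu f hfi s)) ⟨x, ε⟩ =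
      {p : G2 f hfi | p.left ∈ rcoset (zpowers s) x ∧ p.right = ε} := by
  ext p
  constructor
  · rintro ⟨h, hm, rfl⟩
    obtain ⟨k, hk⟩ := mem_zpowers_iff.mp hm
    rw [← hk, uu_zpow, show (SemidirectProduct.inl (s ^ k) : G2 f hfi) = ⟨s ^ k, 1⟩ from rfl,
      mul_mk]
    exact ⟨⟨s ^ k, ⟨k, rfl⟩, by rw [phi_one_apply]⟩, one_mul ε⟩
  · rintro ⟨⟨h, hm, hx⟩, hr⟩
    obtain ⟨k, hk⟩ := mem_zpowers_iff.mp hm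
    rw [← hk] at hx
    refine ⟨(uu f hfi s) ^ k, zpow_mem (mem_zpowers _) k, ?_⟩
    rw [uu_zpow, show (SemidirectProduct.inl (s ^ k) : G2 f hfi) = ⟨s ^ k, 1⟩ from rfl,
      mul_mk]
    ext
    · exact hx.trans (by rw [phi_one_apply])
    · exact hr.trans (one_mul ε).symm

lemma rcoset_sg (f : G →* G) (hfi : ∀ x : G, f (f x) = x) (g : G) :
    rcoset (zpowers (sg f hfi)) ⟨g, 1⟩ = {(⟨g, 1⟩ : G2 f hfi), ⟨f g, g1⟩} := by
  have hmul : sg f hfi * ⟨g, 1⟩ = (⟨f g, g1⟩ : G2 f hfi) := by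
    rw [show sg f hfi = (⟨1, g1⟩ : G2 f hfi) from rfl, mul_mk]
    ext
    · rw [phi_g1_apply, one_mul]
    · exact mul_one g1
  ext p
  constructor
  · rintro ⟨h, hm, rfl⟩
    rcases (mem_zpowers_sg f hfi).mp hm with rfl | rfl
    · left; exact one_mul _
    · right; exact hmul
  · rintro (rfl | rfl)
    · exact ⟨1, one_mem _, (one_mul _).symm⟩
    · exact ⟨sg f hfi, mem_zpowers _, hmul.symm⟩

section Main

variable {G : Type*} [Group G]

def S2 (f : G →* G) (hfi : ∀ x : G, f (f x) = x) (s : G) : Set (G2 f hfi) := {uu f hfi s, sg f hfi}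

lemma mapmem_st (f : G →* G) (s t : G) (hfs : f s ∈ zpowers t) {x : G} (hx : x ∈ zpowers s) : f x ∈ zpowers t := by
  obtain ⟨k, hk⟩ := mem_zpowers_iff.mp hx
  rw [← hk, map_zpow]
  exact zpow_mem hfs k

lemma mapmem_ts (f : G →* G) (s t : G) (hft : f t ∈ zpowers s) {x : G} (hx : x ∈ zpowers t) : f x ∈ zpowers s := by
  obtain ⟨k, hk⟩ := mem_zpowers_iff.mp hx
  rw [← hk, map_zpow]
  exact zpow_mem hft k

lemma f_mem_swap (f : G →* G) (hfi : ∀ x : G, f (f x) = x) (s t : G) (hfs : f s ∈ zpowers t) (hft : f t ∈ zpowers s) (p z : G) :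
    f p ∈ rcoset (zpowers t) z ↔ p ∈ rcoset (zpowers s) (f z) := by
  constructor
  · rintro ⟨h, hm, he⟩
    refine ⟨f h, mapmem_ts f s t hft hm, ?_⟩
    have := congrArg f he
    rwa [hfi, map_mul] at this
  · rintro ⟨h, hm, he⟩
    refine ⟨f h, mapmem_st f s t hfs hm, ?_⟩
    rw [he, map_mul, hfi]

lemma uu_right (f : G →* G) (hfi : ∀ x : G, f (f x) = x) (s : G) : (uu f hfi s).right = 1 := rfl

lemma sg_right (f : G →* G) (hfi : ∀ x : G, f (f x) = x) : (sg f hfi).right = g1 := rfl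

lemma uu_ne_sg (f : G →* G) (hfi : ∀ x : G, f (f x) = x) (s : G) : uu f hfi s ≠ sg f hfi := by
  intro h
  exact g1_ne_one ((congrArg SemidirectProduct.right h).symm)

lemma indep_S2 (f : G →* G) (hfi : ∀ x : G, f (f x) = x) (s : G) : ∀ a ∈ S2 f hfi s, ∀ b ∈ S2 f hfi s, a ≠ b →
    zpowers a ⊓ zpowers b = ⊥ := by
  have key : zpowers (uu f hfi s) ⊓ zpowers (sg f hfi) = ⊥ := by
    rw [eq_bot_iff]
    intro x hx
    rw [Subgroup.mem_inf] at hx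
    rw [Subgroup.mem_bot]
    rcases (mem_zpowers_sg f hfi).mp hx.2 with rfl | rfl
    · rfl
    · obtain ⟨k, hk⟩ := mem_zpowers_iff.mp hx.1
      have : (uu f hfi s ^ k).right = (sg f hfi).right := by rw [hk]
      rw [uu_zpow] at this
      exact absurd this.symm g1_ne_one
  rintro a (rfl | rfl) b (rfl | rfl) hab
  · exact absurd rfl hab
  · exact key
  · rw [inf_comm]; exact key
  · exact absurd rfl hab

def wU (f : G →* G) (hfi : ∀ x : G, f (f x) = x) (s : G) (x : G) (ε : C2) : GVert (S2 f hfi s) :=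
  ⟨(uu f hfi s, rcoset (zpowers (uu f hfi s)) ⟨x, ε⟩), Or.inl rfl, ⟨x, ε⟩, rfl⟩

def wE (f : G →* G) (hfi : ∀ x : G, f (f x) = x) (s : G) (g : G) : GVert (S2 f hfi s) :=
  ⟨(sg f hfi, rcoset (zpowers (sg f hfi)) ⟨g, 1⟩), Or.inr rfl, ⟨g, 1⟩, rfl⟩

lemma vert_form {s t : G} (v : GVert ({s, t} : Set G)) : (∃ g, v = vS s t g) ∨ ∃ g, v = vT s t g := by
  obtain ⟨hu, x, hx⟩ := v.2
  rcases (show v.1.1 = s ∨ v.1.1 = t by simpa [Set.mem_insert_iff] using hu) with h | h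
  · left
    exact ⟨x, gvert_ext h (by rw [hx, h]; rfl)⟩
  · right
    exact ⟨x, gvert_ext h (by rw [hx, h]; rfl)⟩

lemma wU_eq_iff (f : G →* G) (hfi : ∀ x : G, f (f x) = x) (s : G) {x x' : G} {ε ε' : C2} :
    wU f hfi s x ε = wU f hfi s x' ε' ↔ x' ∈ rcoset (zpowers s) x ∧ ε' = ε := by
  constructor
  · intro h
    have h2 : rcoset (zpowers (uu f hfi s)) ⟨x, ε⟩ = rcoset (zpowers (uu f hfi s)) ⟨x', ε'⟩ :=
      congrArg (fun v : GVert (S2 f hfi s) => v.1.2) h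
    have : (⟨x', ε'⟩ : G2 f hfi) ∈ rcoset (zpowers (uu f hfi s)) ⟨x, ε⟩ := by
      rw [h2]; exact mem_rcoset_self _ _
    rw [rcoset_uu] at this
    exact this
  · rintro ⟨h1, h2⟩
    refine gvert_ext rfl ?_
    show rcoset (zpowers (uu f hfi s)) ⟨x, ε⟩ = rcoset (zpowers (uu f hfi s)) ⟨x', ε'⟩
    refine rcoset_eq_of_mem ?_
    rw [rcoset_uu]
    exact ⟨h1, h2⟩

lemma wE_eq_iff (f : G →* G) (hfi : ∀ x : G, f (f x) = x) (s : G) {g g' : G} : wE f hfi s g = wE f hfi s g' ↔ g = g' := by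
  constructor
  · intro h
    have h2 : rcoset (zpowers (sg f hfi)) ⟨g, 1⟩ = rcoset (zpowers (sg f hfi)) ⟨g', 1⟩ :=
      congrArg (fun v : GVert (S2 f hfi s) => v.1.2) h
    have : (⟨g', 1⟩ : G2 f hfi) ∈ rcoset (zpowers (sg f hfi)) ⟨g, 1⟩ := by
      rw [h2]; exact mem_rcoset_self _ _
    rw [rcoset_sg] at this
    rcases this with h | h
    · exact (congrArg SemidirectProduct.left h).symm
    · exact absurd (congrArg SemidirectProduct.right h) g1_ne_one.symm
  · rintro rfl; rfl

lemma wU_ne_wE (f : G →* G) (hfi : ∀ x : G, f (f x) = x) (s : G) (x : G) (ε : C2) (g : G) : wU f hfi s x ε ≠ wE f hfi s g := by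
  intro h
  exact uu_ne_sg f hfi s (congrArg (fun v : GVert (S2 f hfi s) => v.1.1) h)

end Main

section Main2

variable {G : Type*} [Group G]

def Dset (f : G →* G) (hfi : ∀ x : G, f (f x) = x) {s t : G}
    (e : Sym2 (GVert ({s, t} : Set G))) : Set (G2 f hfi) :=
  {p | (p.right = 1 ∧ ∀ w ∈ e, p.left ∈ w.1.2) ∨ (p.right = g1 ∧ ∀ w ∈ e, f p.left ∈ w.1.2)}

lemma Dset_eq (f : G →* G) (hfi : ∀ x : G, f (f x) = x) {s t : G}
    (hind : ∀ x : G, x ∈ zpowers s → x ∈ zpowers t → x = 1) (g : G) :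
    Dset f hfi (s(vS s t g, vT s t g)) = rcoset (zpowers (sg f hfi)) ⟨g, 1⟩ := by
  rw [rcoset_sg]
  ext p
  constructor
  · rintro (⟨hr, hmem⟩ | ⟨hr, hmem⟩)
    · have h1 : p.left ∈ rcoset (zpowers s) g :=
        hmem (vS s t g) (by rw [Sym2.mem_iff]; left; rfl)
      have h2 : p.left ∈ rcoset (zpowers t) g :=
        hmem (vT s t g) (by rw [Sym2.mem_iff]; right; rfl)
      left
      ext
      · exact unique_common hind h1 h2
      · exact hr
    · have h1 : f p.left ∈ rcoset (zpowers s) g :=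
        hmem (vS s t g) (by rw [Sym2.mem_iff]; left; rfl)
      have h2 : f p.left ∈ rcoset (zpowers t) g :=
        hmem (vT s t g) (by rw [Sym2.mem_iff]; right; rfl)
      right
      rw [Set.mem_singleton_iff]
      have hfl : f p.left = g := unique_common hind h1 h2
      ext
      · show p.left = f g
        rw [← hfl, hfi]
      · exact hr
  · rintro (rfl | h)
    · left
      refine ⟨rfl, ?_⟩
      intro w hw
      rw [Sym2.mem_iff] at hw
      rcases hw with rfl | rfl
      · exact mem_rcoset_self (zpowers s) g
      · exact mem_rcoset_self (zpowers t) g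
    · rw [Set.mem_singleton_iff] at h
      subst h
      right
      refine ⟨rfl, ?_⟩
      intro w hw
      rw [Sym2.mem_iff] at hw
      rcases hw with rfl | rfl
      · show f (f g) ∈ rcoset (zpowers s) g
        rw [hfi]
        exact mem_rcoset_self (zpowers s) g
      · show f (f g) ∈ rcoset (zpowers t) g
        rw [hfi]
        exact mem_rcoset_self (zpowers t) g

open scoped Classical in
noncomputable def PsiV (f : G →* G) (hfi : ∀ x : G, f (f x) = x) (s t : G)
    (hfs : f s ∈ zpowers t) (hft : f t ∈ zpowers s)
    (v : GVert ({s, t} : Set G)) : GVert (S2 f hfi s) :=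
  if h : v.1.1 = s then
    ⟨(uu f hfi s, {p : G2 f hfi | p.left ∈ v.1.2 ∧ p.right = 1}), Or.inl rfl, by
      obtain ⟨hu, x, hx⟩ := v.2
      exact ⟨⟨x, 1⟩, by rw [hx, h, rcoset_uu]⟩⟩
  else
    ⟨(uu f hfi s, {p : G2 f hfi | f p.left ∈ v.1.2 ∧ p.right = g1}), Or.inl rfl, by
      obtain ⟨hu, x, hx⟩ := v.2
      have ht : v.1.1 = t := by
        rcases (show v.1.1 = s ∨ v.1.1 = t by simpa [Set.mem_insert_iff] using hu) with h' | h'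
        · exact absurd h' h
        · exact h'
      refine ⟨⟨f x, g1⟩, ?_⟩
      rw [rcoset_uu, hx, ht]
      ext p
      exact and_congr (f_mem_swap f hfi s t hfs hft p.left x) Iff.rfl⟩

noncomputable def PsiE (f : G →* G) (hfi : ∀ x : G, f (f x) = x) {s t : G} (hst : s ≠ t)
    (hind : ∀ x : G, x ∈ zpowers s → x ∈ zpowers t → x = 1)
    (e : Sym2 (GVert ({s, t} : Set G))) (he : e ∈ (cosetGraph ({s, t} : Set G)).edgeSet) :
    GVert (S2 f hfi s) :=
  ⟨(sg f hfi, Dset f hfi e), Or.inr rfl, by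
    obtain ⟨g, rfl⟩ := edge_form hst hind he
    exact ⟨⟨g, 1⟩, Dset_eq f hfi hind g⟩⟩

lemma PsiV_vS (f : G →* G) (hfi : ∀ x : G, f (f x) = x) {s t : G}
    (hfs : f s ∈ zpowers t) (hft : f t ∈ zpowers s) (g : G) :
    PsiV f hfi s t hfs hft (vS s t g) = wU f hfi s g 1 := by
  unfold PsiV
  refine (dif_pos (show (vS s t g).1.1 = s from rfl)).trans ?_
  exact gvert_ext rfl (rcoset_uu f hfi s g 1).symm

lemma PsiV_vT (f : G →* G) (hfi : ∀ x : G, f (f x) = x) {s t : G} (hst : s ≠ t)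
    (hfs : f s ∈ zpowers t) (hft : f t ∈ zpowers s) (g : G) :
    PsiV f hfi s t hfs hft (vT s t g) = wU f hfi s (f g) g1 := by
  unfold PsiV
  refine (dif_neg (show ¬((vT s t g).1.1 = s) from fun h => hst h.symm)).trans ?_
  refine gvert_ext rfl ?_
  show {p : G2 f hfi | f p.left ∈ rcoset (zpowers t) g ∧ p.right = g1} =
    rcoset (zpowers (uu f hfi s)) ⟨f g, g1⟩
  rw [rcoset_uu]
  ext p
  exact and_congr (f_mem_swap f hfi s t hfs hft p.left g) Iff.rfl

lemma PsiE_eval (f : G →* G) (hfi : ∀ x : G, f (f x) = x) {s t : G} (hst : s ≠ t)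
    (hind : ∀ x : G, x ∈ zpowers s → x ∈ zpowers t → x = 1) (g : G)
    (he : s(vS s t g, vT s t g) ∈ (cosetGraph ({s, t} : Set G)).edgeSet) :
    PsiE f hfi hst hind _ he = wE f hfi s g :=
  gvert_ext rfl (Dset_eq f hfi hind g)

end Main2

section Main3

variable {G : Type*} [Group G]

lemma inc_adj {V : Type*} (Γ : SimpleGraph V) (x y : V ⊕ Γ.edgeSet) :
    (incidenceGraph Γ).Adj x y ↔ x ≠ y ∧
      ((∃ v a, x = Sum.inl v ∧ y = Sum.inr a ∧ v ∈ (a : Sym2 V)) ∨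
       (∃ v a, y = Sum.inl v ∧ x = Sum.inr a ∧ v ∈ (a : Sym2 V))) := by
  unfold incidenceGraph
  rw [SimpleGraph.fromRel_adj]

lemma inc_adj_inl_inl {V : Type*} (Γ : SimpleGraph V) (v v' : V) :
    ¬ (incidenceGraph Γ).Adj (Sum.inl v) (Sum.inl v') := by
  rw [inc_adj]
  rintro ⟨hne, (⟨v0, a0, h1, h2, h3⟩ | ⟨v0, a0, h1, h2, h3⟩)⟩ <;> exact Sum.inl_ne_inr h2

lemma inc_adj_inr_inr {V : Type*} (Γ : SimpleGraph V) (e e' : Γ.edgeSet) :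
    ¬ (incidenceGraph Γ).Adj (Sum.inr e) (Sum.inr e') := by
  rw [inc_adj]
  rintro ⟨hne, (⟨v0, a0, h1, h2, h3⟩ | ⟨v0, a0, h1, h2, h3⟩)⟩ <;> exact Sum.inr_ne_inl h1

lemma inc_adj_inl_inr {V : Type*} (Γ : SimpleGraph V) (v : V) (e : Γ.edgeSet) :
    (incidenceGraph Γ).Adj (Sum.inl v) (Sum.inr e) ↔ v ∈ (e : Sym2 V) := by
  rw [inc_adj]
  constructor
  · rintro ⟨hne, (⟨v0, a0, h1, h2, h3⟩ | ⟨v0, a0, h1, h2, h3⟩)⟩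
    · obtain rfl : v = v0 := Sum.inl_injective h1
      obtain rfl : e = a0 := Sum.inr_injective h2
      exact h3
    · exact (Sum.inl_ne_inr h2).elim
  · intro h
    exact ⟨fun hh => Sum.inl_ne_inr hh, Or.inl ⟨v, e, rfl, rfl, h⟩⟩

variable (f : G →* G) (hfi : ∀ x : G, f (f x) = x) {s t : G} (hst : s ≠ t)
  (hind : ∀ x : G, x ∈ zpowers s → x ∈ zpowers t → x = 1)
  (hfs : f s ∈ zpowers t) (hft : f t ∈ zpowers s)

noncomputable def Psi :
    (GVert ({s, t} : Set G) ⊕ (cosetGraph ({s, t} : Set G)).edgeSet) → GVert (S2 f hfi s) :=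
  Sum.elim (PsiV f hfi s t hfs hft) (fun e => PsiE f hfi hst hind e.1 e.2)

lemma Psi_inj : Function.Injective (Psi f hfi hst hind hfs hft) := by
  have swapback : ∀ g g' : G, f g' ∈ rcoset (zpowers s) (f g) → g' ∈ rcoset (zpowers t) g := by
    intro g g' h
    have := (f_mem_swap f hfi s t hfs hft (f g') g).mpr h
    rwa [hfi] at this
  rintro (v | ⟨e, he⟩) (v' | ⟨e', he'⟩) h
  · rcases vert_form v with ⟨g, rfl⟩ | ⟨g, rfl⟩ <;> rcases vert_form v' with ⟨g', rfl⟩ | ⟨g', rfl⟩ <;>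
      simp only [Psi, Sum.elim_inl, PsiV_vS, PsiV_vT f hfi hst] at h
    · rw [wU_eq_iff] at h
      rw [congrArg Sum.inl (vS_eq_iff.mpr h.1)]
    · rw [wU_eq_iff] at h
      exact absurd h.2 g1_ne_one
    · rw [wU_eq_iff] at h
      exact absurd h.2.symm g1_ne_one
    · rw [wU_eq_iff] at h
      exact congrArg Sum.inl (vT_eq_iff.mpr (swapback g g' h.1))
  · rcases vert_form v with ⟨g, rfl⟩ | ⟨g, rfl⟩ <;>
      obtain ⟨g', rfl⟩ := edge_form hst hind he' <;>
      simp only [Psi, Sum.elim_inl, Sum.elim_inr, PsiV_vS, PsiV_vT f hfi hst,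
        PsiE_eval f hfi hst hind] at h
    · exact absurd h (wU_ne_wE f hfi s _ _ _)
    · exact absurd h (wU_ne_wE f hfi s _ _ _)
  · obtain ⟨g, rfl⟩ := edge_form hst hind he
    rcases vert_form v' with ⟨g', rfl⟩ | ⟨g', rfl⟩ <;>
      simp only [Psi, Sum.elim_inl, Sum.elim_inr, PsiV_vS, PsiV_vT f hfi hst,
        PsiE_eval f hfi hst hind] at h
    · exact absurd h.symm (wU_ne_wE f hfi s _ _ _)
    · exact absurd h.symm (wU_ne_wE f hfi s _ _ _)
  · obtain ⟨g, hg⟩ := edge_form hst hind he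
    obtain ⟨g', hg'⟩ := edge_form hst hind he'
    subst hg hg'
    simp only [Psi, Sum.elim_inr, PsiE_eval f hfi hst hind] at h
    rw [wE_eq_iff] at h
    subst h
    rfl

lemma Psi_surj : Function.Surjective (Psi f hfi hst hind hfs hft) := by
  rintro ⟨⟨w, D⟩, hw, ⟨x, ε⟩, hD⟩
  have case_uu : ∀ (hwu : w = uu f hfi s), ∃ a, Psi f hfi hst hind hfs hft a =
      ⟨(w, D), hw, ⟨x, ε⟩, hD⟩ := by
    intro hwu
    subst hwu
    rcases c2_cases ε with rfl | rfl
    · refine ⟨Sum.inl (vS s t x), ?_⟩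
      show PsiV f hfi s t hfs hft (vS s t x) = _
      rw [PsiV_vS]
      exact gvert_ext rfl (by rw [hD]; rfl)
    · refine ⟨Sum.inl (vT s t (f x)), ?_⟩
      show PsiV f hfi s t hfs hft (vT s t (f x)) = _
      rw [PsiV_vT f hfi hst, hfi]
      exact gvert_ext rfl (by rw [hD]; rfl)
  have case_sg : ∀ (hwu : w = sg f hfi), ∃ a, Psi f hfi hst hind hfs hft a =
      ⟨(w, D), hw, ⟨x, ε⟩, hD⟩ := by
    intro hwu
    subst hwu
    rcases c2_cases ε with rfl | rfl
    · refine ⟨Sum.inr ⟨_, edge_mem hst x⟩, ?_⟩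
      show PsiE f hfi hst hind (s(vS s t x, vT s t x)) (edge_mem hst x) = _
      rw [PsiE_eval f hfi hst hind]
      exact gvert_ext rfl (by rw [hD]; rfl)
    · refine ⟨Sum.inr ⟨_, edge_mem hst (f x)⟩, ?_⟩
      show PsiE f hfi hst hind (s(vS s t (f x), vT s t (f x))) (edge_mem hst (f x)) = _
      rw [PsiE_eval f hfi hst hind]
      refine gvert_ext rfl ?_
      show rcoset (zpowers (sg f hfi)) ⟨f x, 1⟩ = D
      rw [show D = rcoset (zpowers (sg f hfi)) (⟨x, g1⟩ : G2 f hfi) from hD]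
      refine rcoset_eq_of_mem ?_
      rw [rcoset_sg]
      right
      rw [Set.mem_singleton_iff]
      ext
      · exact (hfi x).symm
      · rfl
  rcases (show w = uu f hfi s ∨ w = sg f hfi by simpa [S2, Set.mem_insert_iff] using hw) with
    hwu | hwu
  · exact case_uu hwu
  · exact case_sg hwu

end Main3

section Main4

variable {G : Type*} [Group G]
variable (f : G →* G) (hfi : ∀ x : G, f (f x) = x) {s t : G} (hst : s ≠ t)
  (hind : ∀ x : G, x ∈ zpowers s → x ∈ zpowers t → x = 1)
  (hfs : f s ∈ zpowers t) (hft : f t ∈ zpowers s)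

lemma inter_uu_sg (x : G) (ε : C2) (g : G) :
    (rcoset (zpowers (uu f hfi s)) ⟨x, ε⟩ ∩ rcoset (zpowers (sg f hfi)) ⟨g, 1⟩).Nonempty ↔
      (ε = 1 ∧ g ∈ rcoset (zpowers s) x) ∨ (ε = g1 ∧ f g ∈ rcoset (zpowers s) x) := by
  rw [rcoset_uu, rcoset_sg]
  constructor
  · rintro ⟨p, hp1, hp2⟩
    rw [Set.mem_insert_iff, Set.mem_singleton_iff] at hp2
    rcases hp2 with rfl | rfl
    · exact Or.inl ⟨hp1.2.symm, hp1.1⟩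
    · exact Or.inr ⟨hp1.2.symm, hp1.1⟩
  · rintro (⟨rfl, hg⟩ | ⟨rfl, hg⟩)
    · exact ⟨⟨g, 1⟩, ⟨hg, rfl⟩, Set.mem_insert _ _⟩
    · exact ⟨⟨f g, g1⟩, ⟨hg, rfl⟩, Set.mem_insert_of_mem _ rfl⟩

lemma Psi_adj (a b : GVert ({s, t} : Set G) ⊕ (cosetGraph ({s, t} : Set G)).edgeSet) :
    (cosetGraph (S2 f hfi s)).Adj (Psi f hfi hst hind hfs hft a) (Psi f hfi hst hind hfs hft b)
      ↔ (incidenceGraph (cosetGraph ({s, t} : Set G))).Adj a b := by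
  have swapiff : ∀ g g' : G, g ∈ rcoset (zpowers t) g' ↔ f g ∈ rcoset (zpowers s) (f g') := by
    intro g g'
    have := f_mem_swap f hfi s t hfs hft (f g) g'
    rwa [hfi] at this
  have hmix : ∀ (v : GVert ({s, t} : Set G)) (e : (cosetGraph ({s, t} : Set G)).edgeSet),
      ((cosetGraph (S2 f hfi s)).Adj (Psi f hfi hst hind hfs hft (Sum.inl v))
        (Psi f hfi hst hind hfs hft (Sum.inr e)) ↔
       (incidenceGraph (cosetGraph ({s, t} : Set G))).Adj (Sum.inl v) (Sum.inr e)) := by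
    intro v ⟨e, he⟩
    obtain ⟨g, hg⟩ := edge_form hst hind he
    rw [inc_adj_inl_inr]
    have hPsiE : Psi f hfi hst hind hfs hft (Sum.inr ⟨e, he⟩) = wE f hfi s g := by
      show PsiE f hfi hst hind e he = wE f hfi s g
      subst hg
      exact PsiE_eval f hfi hst hind g he
    rw [hPsiE]
    show _ ↔ v ∈ e
    rw [show e = s(vS s t g, vT s t g) from hg, Sym2.mem_iff]
    rcases vert_form v with ⟨g', rfl⟩ | ⟨g', rfl⟩
    · rw [show Psi f hfi hst hind hfs hft (Sum.inl (vS s t g')) = wU f hfi s g' 1 from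
        PsiV_vS f hfi hfs hft g']
      rw [cosetGraph_adj]
      constructor
      · rintro ⟨-, hint⟩
        have h2 := (inter_uu_sg f hfi g' 1 g).mp hint
        rcases h2 with ⟨-, hg2⟩ | ⟨h1, -⟩
        · exact Or.inl (vS_eq_iff.mpr hg2)
        · exact absurd h1.symm g1_ne_one
      · rintro (h | h)
        · refine ⟨wU_ne_wE f hfi s g' 1 g, ?_⟩
          refine (inter_uu_sg f hfi g' 1 g).mpr (Or.inl ⟨rfl, ?_⟩)
          exact vS_eq_iff.mp h
        · exact absurd h (vS_ne_vT hst g' g)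
    · rw [show Psi f hfi hst hind hfs hft (Sum.inl (vT s t g')) = wU f hfi s (f g') g1 from
        PsiV_vT f hfi hst hfs hft g']
      rw [cosetGraph_adj]
      constructor
      · rintro ⟨-, hint⟩
        have h2 := (inter_uu_sg f hfi (f g') g1 g).mp hint
        rcases h2 with ⟨h1, -⟩ | ⟨-, hg2⟩
        · exact absurd h1 g1_ne_one
        · exact Or.inr (vT_eq_iff.mpr ((swapiff g g').mpr hg2))
      · rintro (h | h)
        · exact absurd h (fun hh => vS_ne_vT hst g g' hh.symm)
        · refine ⟨wU_ne_wE f hfi s (f g') g1 g, ?_⟩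
          refine (inter_uu_sg f hfi (f g') g1 g).mpr (Or.inr ⟨rfl, ?_⟩)
          exact (swapiff g g').mp (vT_eq_iff.mp h)
  rcases a with v | e <;> rcases b with v' | e'
  · refine iff_of_false ?_ (inc_adj_inl_inl _ v v')
    obtain ⟨x, hx⟩ : ∃ x : G × C2, Psi f hfi hst hind hfs hft (Sum.inl v) = wU f hfi s x.1 x.2 := by
      rcases vert_form v with ⟨g, rfl⟩ | ⟨g, rfl⟩
      · exact ⟨(g, 1), PsiV_vS f hfi hfs hft g⟩
      · exact ⟨(f g, g1), PsiV_vT f hfi hst hfs hft g⟩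
    obtain ⟨y, hy⟩ : ∃ y : G × C2, Psi f hfi hst hind hfs hft (Sum.inl v') = wU f hfi s y.1 y.2 := by
      rcases vert_form v' with ⟨g, rfl⟩ | ⟨g, rfl⟩
      · exact ⟨(g, 1), PsiV_vS f hfi hfs hft g⟩
      · exact ⟨(f g, g1), PsiV_vT f hfi hst hfs hft g⟩
    rw [hx, hy, cosetGraph_adj]
    rintro ⟨hne, hint⟩
    have : rcoset (zpowers (uu f hfi s)) ⟨x.1, x.2⟩ = rcoset (zpowers (uu f hfi s)) ⟨y.1, y.2⟩ :=
      rcoset_eq_of_inter hint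
    exact hne (gvert_ext rfl this)
  · exact hmix v e'
  · calc (cosetGraph (S2 f hfi s)).Adj _ _
        ↔ (cosetGraph (S2 f hfi s)).Adj (Psi f hfi hst hind hfs hft (Sum.inl v'))
          (Psi f hfi hst hind hfs hft (Sum.inr e)) := SimpleGraph.adj_comm _ _ _
      _ ↔ (incidenceGraph (cosetGraph ({s, t} : Set G))).Adj (Sum.inl v') (Sum.inr e) :=
          hmix v' e
      _ ↔ _ := SimpleGraph.adj_comm _ _ _
  · refine iff_of_false ?_ (inc_adj_inr_inr _ e e')
    obtain ⟨g, hg⟩ := edge_form hst hind e.2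
    obtain ⟨g', hg'⟩ := edge_form hst hind e'.2
    have h1 : Psi f hfi hst hind hfs hft (Sum.inr e) = wE f hfi s g := by
      show PsiE f hfi hst hind e.1 e.2 = _
      have := PsiE_eval f hfi hst hind g (hg ▸ e.2)
      convert this using 2 <;> rw [hg]
    have h2 : Psi f hfi hst hind hfs hft (Sum.inr e') = wE f hfi s g' := by
      show PsiE f hfi hst hind e'.1 e'.2 = _
      have := PsiE_eval f hfi hst hind g' (hg' ▸ e'.2)
      convert this using 2 <;> rw [hg']
    rw [h1, h2, cosetGraph_adj]
    rintro ⟨hne, hint⟩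
    have : rcoset (zpowers (sg f hfi)) ⟨g, 1⟩ = rcoset (zpowers (sg f hfi)) ⟨g', 1⟩ :=
      rcoset_eq_of_inter hint
    exact hne (gvert_ext rfl this)

noncomputable def PsiIso :
    incidenceGraph (cosetGraph ({s, t} : Set G)) ≃g cosetGraph (S2 f hfi s) where
  toEquiv := Equiv.ofBijective _ ⟨Psi_inj f hfi hst hind hfs hft, Psi_surj f hfi hst hind hfs hft⟩
  map_rel_iff' := @fun a b => Psi_adj f hfi hst hind hfs hft a b

end Main4

section Transfer

variable {G1 : Type*} {G2' : Type*} [Group G1] [Group G2']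

lemma image_rcoset (e : G1 ≃* G2') (a x : G1) :
    (e : G1 → G2') '' rcoset (zpowers a) x = rcoset (zpowers (e a)) (e x) := by
  ext y
  constructor
  · rintro ⟨g, ⟨h, hm, rfl⟩, rfl⟩
    obtain ⟨k, hk⟩ := mem_zpowers_iff.mp hm
    refine ⟨(e a) ^ k, zpow_mem (mem_zpowers _) k, ?_⟩
    rw [map_mul, ← hk, map_zpow]
  · rintro ⟨h, hm, rfl⟩
    obtain ⟨k, hk⟩ := mem_zpowers_iff.mp hm
    refine ⟨a ^ k * x, ⟨a ^ k, zpow_mem (mem_zpowers _) k, rfl⟩, ?_⟩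
    rw [map_mul, map_zpow, hk]

lemma symm_image_image (e : G1 ≃* G2') (C : Set G1) : e.symm '' ((e : G1 → G2') '' C) = C := by
  rw [Set.image_image]
  simp only [MulEquiv.symm_apply_apply, Set.image_id']

lemma image_symm_image (e : G1 ≃* G2') (D : Set G2') : (e : G1 → G2') '' (e.symm '' D) = D := by
  rw [Set.image_image]
  simp only [MulEquiv.apply_symm_apply, Set.image_id']

noncomputable def transferEquiv (e : G1 ≃* G2') (S : Set G1) :
    GVert S ≃ GVert ((e : G1 → G2') '' S) where
  toFun v := ⟨(e v.1.1, (e : G1 → G2') '' v.1.2), ⟨v.1.1, v.2.1, rfl⟩, by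
    obtain ⟨-, x, hx⟩ := v.2
    exact ⟨e x, by rw [hx, image_rcoset]⟩⟩
  invFun w := ⟨(e.symm w.1.1, e.symm '' w.1.2), by
      obtain ⟨a, ha, haw⟩ := w.2.1
      rw [← haw, MulEquiv.symm_apply_apply]
      exact ha, by
    obtain ⟨-, x, hx⟩ := w.2
    exact ⟨e.symm x, by rw [hx, image_rcoset e.symm]⟩⟩
  left_inv v := gvert_ext (MulEquiv.symm_apply_apply e v.1.1) (symm_image_image e v.1.2)
  right_inv w := gvert_ext (MulEquiv.apply_symm_apply e w.1.1) (image_symm_image e w.1.2)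

lemma transferEquiv_snd (e : G1 ≃* G2') (S : Set G1) (v : GVert S) :
    ((transferEquiv e S) v).1.2 = (e : G1 → G2') '' v.1.2 := rfl

noncomputable def transferIso (e : G1 ≃* G2') (S : Set G1) :
    cosetGraph S ≃g cosetGraph ((e : G1 → G2') '' S) where
  toEquiv := transferEquiv e S
  map_rel_iff' := by
    intro v w
    rw [cosetGraph_adj, cosetGraph_adj]
    refine and_congr (transferEquiv e S).injective.ne_iff ?_
    rw [transferEquiv_snd, transferEquiv_snd, ← Set.image_inter (MulEquiv.injective e),
      Set.image_nonempty]

lemma indep_transfer (e : G1 ≃* G2') (S : Set G1)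
    (h : ∀ a ∈ S, ∀ b ∈ S, a ≠ b → zpowers a ⊓ zpowers b = ⊥) :
    ∀ a' ∈ (e : G1 → G2') '' S, ∀ b' ∈ (e : G1 → G2') '' S, a' ≠ b' →
      zpowers a' ⊓ zpowers b' = ⊥ := by
  rintro a' ⟨a, ha, rfl⟩ b' ⟨b, hb, rfl⟩ hne
  have hab : a ≠ b := fun hh => hne (congrArg e hh)
  have h0 := h a ha b hb hab
  rw [eq_bot_iff]
  intro x hx
  rw [Subgroup.mem_inf] at hx
  rw [Subgroup.mem_bot]
  obtain ⟨k, hk⟩ := mem_zpowers_iff.mp hx.1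
  obtain ⟨j, hj⟩ := mem_zpowers_iff.mp hx.2
  have hab2 : a ^ k = b ^ j := MulEquiv.injective e (by rw [map_zpow, map_zpow, hk, hj])
  have hm : a ^ k ∈ zpowers a ⊓ zpowers b :=
    Subgroup.mem_inf.mpr ⟨zpow_mem (mem_zpowers a) k, hab2 ▸ zpow_mem (mem_zpowers b) j⟩
  rw [h0, Subgroup.mem_bot] at hm
  rw [← hk, ← map_zpow, hm, map_one]

end Transfer

section Count

variable {G : Type*} [Group G]

lemma countable_of_gen {s t : G} (hgen : Subgroup.closure {s, t} = ⊤) : Countable G := by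
  have hfin : ({s, t, s⁻¹, t⁻¹} : Set G).Finite :=
    (((Set.finite_singleton t⁻¹).insert s⁻¹).insert t).insert s
  have : Countable ↥({s, t, s⁻¹, t⁻¹} : Set G) := @Finite.to_countable _ hfin.to_subtype
  refine Function.Surjective.countable
    (f := fun l : List ↥({s, t, s⁻¹, t⁻¹} : Set G) => (l.map Subtype.val).prod) ?_
  intro g
  have hg : g ∈ (Subgroup.closure ({s, t} : Set G)).toSubmonoid := by
    rw [hgen]; trivial
  rw [Subgroup.closure_toSubmonoid] at hg
  obtain ⟨l, hl, rfl⟩ := Submonoid.exists_list_of_mem_closure hg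
  have hmem : ∀ y ∈ l, y ∈ ({s, t, s⁻¹, t⁻¹} : Set G) := by
    intro y hy
    rcases hl y hy with h | h
    · rcases h with rfl | h
      · exact Set.mem_insert _ _
      · rw [Set.mem_singleton_iff] at h
        subst h
        exact Set.mem_insert_of_mem _ (Set.mem_insert _ _)
    · rw [Set.mem_inv, Set.mem_insert_iff, Set.mem_singleton_iff] at h
      rcases h with h | h
      · have : y = s⁻¹ := by rw [← h, inv_inv]
        subst this
        exact Set.mem_insert_of_mem _ (Set.mem_insert_of_mem _ (Set.mem_insert _ _))
      · have : y = t⁻¹ := by rw [← h, inv_inv]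
        subst this
        exact Set.mem_insert_of_mem _ (Set.mem_insert_of_mem _
          (Set.mem_insert_of_mem _ rfl))
  clear hl hg
  induction l with
  | nil => exact ⟨[], rfl⟩
  | cons a l ih =>
    obtain ⟨L, hL⟩ := ih (fun y hy => hmem y (List.mem_cons_of_mem a hy))
    refine ⟨⟨a, hmem a (List.mem_cons_self)⟩ :: L, ?_⟩
    simp only [List.map_cons, List.prod_cons]
    rw [show ((L.map Subtype.val).prod : G) = l.prod from hL]

lemma countable_G2 (f : G →* G) (hfi : ∀ x : G, f (f x) = x) [Countable G] :
    Countable (G2 f hfi) := by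
  refine Function.Injective.countable (f := fun p : G2 f hfi => (p.left, p.right)) ?_
  intro p q h
  rw [Prod.mk.injEq] at h
  ext
  · exact h.1
  · exact h.2

end Count

end IBS


/-- Sufficient condition: if `G = ⟨s,t⟩` with `s ≠ t` independent, and there is an
involutive group homomorphism `f : G → G` such that for all `x`, `f(sx) = t^m f(x)` and
`f(tx) = s^n f(x)` for some `m, n ∈ ℤ`, then the incidence graph of `Γ = Φ(G,{s,t})` is a
G-graph. -/
theorem incidence_bipartite_sufficient {G : Type*} [Group G] (s t : G) (hst : s ≠ t)
    (hgen : Subgroup.closure {s, t} = ⊤)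
    (hind : Subgroup.zpowers s ⊓ Subgroup.zpowers t = ⊥)
    (f : G →* G) (hinv : f.comp f = MonoidHom.id G)
    (hf : ∀ x : G, ∃ m n : ℤ, f (s * x) = t ^ m * f x ∧ f (t * x) = s ^ n * f x) :
    ∃ (G' : Type) (_ : Group G') (S' : Set G'),
      (∀ a ∈ S', ∀ b ∈ S', a ≠ b → Subgroup.zpowers a ⊓ Subgroup.zpowers b = ⊥) ∧
      Nonempty (incidenceGraph (cosetGraph ({s, t} : Set G)) ≃g cosetGraph S') := by
  classical
  have hfi : ∀ x : G, f (f x) = x := fun x => DFunLike.congr_fun hinv x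
  obtain ⟨m, n, h1, h2⟩ := hf 1
  rw [mul_one, map_one, mul_one] at h1 h2
  have hfs : f s ∈ Subgroup.zpowers t := h1 ▸ Subgroup.zpow_mem _ (Subgroup.mem_zpowers t) m
  have hft : f t ∈ Subgroup.zpowers s := h2 ▸ Subgroup.zpow_mem _ (Subgroup.mem_zpowers s) n
  have hind' : ∀ x : G, x ∈ Subgroup.zpowers s → x ∈ Subgroup.zpowers t → x = 1 := by
    intro x hx1 hx2
    have hx : x ∈ Subgroup.zpowers s ⊓ Subgroup.zpowers t := Subgroup.mem_inf.mpr ⟨hx1, hx2⟩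
    rw [hind, Subgroup.mem_bot] at hx
    exact hx
  have hcount : Countable G := IBS.countable_of_gen hgen
  have hc2 : Countable (IBS.G2 f hfi) := IBS.countable_G2 f hfi
  have hsmall : Small.{0} (IBS.G2 f hfi) := Countable.toSmall _
  refine ⟨Shrink.{0} (IBS.G2 f hfi), inferInstance,
    ((Shrink.mulEquiv (α := IBS.G2 f hfi)).symm : IBS.G2 f hfi → Shrink.{0} (IBS.G2 f hfi)) ''
      IBS.S2 f hfi s, ?_, ?_⟩
  · exact IBS.indep_transfer _ _ (IBS.indep_S2 f hfi s)
  · exact ⟨(IBS.PsiIso f hfi hst hind' hfs hft).trans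
      (IBS.transferIso (Shrink.mulEquiv (α := IBS.G2 f hfi)).symm (IBS.S2 f hfi s))⟩
end

section
/- If n > 2 and n ≡ 2 (mod 4), then no permutation τ ∈ S_n satisfies condition (C). (Hence the incidence graph of K_n is not a G-graph for such n.) -/
/-- The `(n-1)`-cycle `σ = (1,2,...,n-1)` of `S_n`, viewed as a permutation of `ℕ`
fixing `0` and every `k ≥ n`: `σ(k) = k+1` for `1 ≤ k ≤ n-2`, `σ(n-1) = 1`. -/
def sigmaFun (n k : ℕ) : ℕ :=
  if 1 ≤ k ∧ k ≤ n - 2 then k + 1 else if k = n - 1 then 1 else k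

/-- The involution `ρ ∈ S_n` with `ρ(n-1) = n`, `ρ(n) = n-1` and `ρ(k) = n-1-k` for
`1 ≤ k ≤ n-2`, viewed as a permutation of `ℕ` fixing `0` and every `k > n`. -/
def rhoFun (n k : ℕ) : ℕ :=
  if 1 ≤ k ∧ k ≤ n - 2 then n - 1 - k
  else if k = n - 1 then n else if k = n then n - 1 else k

/-- Condition (C): `τ ∈ S_n` (i.e. `τ` fixes `0` and every `k > n`) has order `2`,
`τ(n) = n-1`, and for every `k ∈ {1,...,n-2}`,
`τ σ^k τ = σ^(τ(k)) τ σ^(τ(ρ(τ(k))))`. -/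
def ConditionC (n : ℕ) (σ ρ τ : Equiv.Perm ℕ) : Prop :=
  orderOf τ = 2 ∧ τ n = n - 1 ∧ (∀ k : ℕ, k = 0 ∨ n < k → τ k = k) ∧
  ∀ k : ℕ, 1 ≤ k → k ≤ n - 2 →
    τ * σ ^ k * τ = σ ^ (τ k) * τ * σ ^ (τ (ρ (τ k)))

section Aux

lemma aux_le_of_fix (n : ℕ) (π : Equiv.Perm ℕ) (h : ∀ x, n < x → π x = x)
    {x : ℕ} (hx : x ≤ n) : π x ≤ n := by
  by_contra hc
  push_neg at hc
  have h1 : π (π x) = π x := h _ hc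
  have := π.injective h1
  omega

lemma aux_inv_fix (n : ℕ) (π : Equiv.Perm ℕ) (h : ∀ x, n < x → π x = x)
    (x : ℕ) (hx : n < x) : π⁻¹ x = x := by
  conv_lhs => rw [← h x hx]
  exact π.symm_apply_apply x

/-- Restriction of a permutation of `ℕ` fixing everything above `n` to `Fin (n+1)`. -/
def restrictPerm (n : ℕ) (π : Equiv.Perm ℕ) (h : ∀ x, n < x → π x = x) :
    Equiv.Perm (Fin (n + 1)) where
  toFun x := ⟨π x, by have := aux_le_of_fix n π h (x := (x : ℕ)) (by omega); omega⟩
  invFun x := ⟨π⁻¹ x, by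
    have := aux_le_of_fix n π⁻¹ (aux_inv_fix n π h) (x := (x : ℕ)) (by omega); omega⟩
  left_inv x := by
    apply Fin.ext
    simp
  right_inv x := by
    apply Fin.ext
    simp

@[simp] lemma restrictPerm_apply (n : ℕ) (π : Equiv.Perm ℕ) (h : ∀ x, n < x → π x = x)
    (x : Fin (n + 1)) : ((restrictPerm n π h) x : ℕ) = π x := rfl

lemma restrictPerm_pow_apply (n : ℕ) (π : Equiv.Perm ℕ) (h : ∀ x, n < x → π x = x)
    (j : ℕ) : ∀ x : Fin (n + 1), (((restrictPerm n π h) ^ j) x : ℕ) = (π ^ j) x := by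
  induction j with
  | zero => intro x; simp
  | succ j ih =>
      intro x
      rw [pow_succ, Equiv.Perm.mul_apply, pow_succ, Equiv.Perm.mul_apply, ih,
        restrictPerm_apply]

lemma units_odd_pow_eq_one {u : ℤˣ} {k : ℕ} (hk : k % 2 = 1) (h : u ^ k = 1) : u = 1 := by
  have h2 : u ^ 2 = 1 := Int.units_sq u
  obtain ⟨q, hq⟩ : ∃ q, k = 2 * q + 1 := ⟨k / 2, by omega⟩
  calc u = u ^ k := by rw [hq, pow_succ, pow_mul, h2, one_pow, one_mul]
  _ = 1 := h

end Aux

/-- If `n > 2` and `n ≡ 2 (mod 4)`, then no permutation `τ ∈ S_n` satisfies condition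
(C); hence the incidence graph of `K_n` is not a G-graph for such `n`. -/
theorem no_conditionC_of_two_mod_four (n : ℕ) (hn : 2 < n) (hmod : n % 4 = 2)
    (σ ρ : Equiv.Perm ℕ)
    (hσ : ∀ k, σ k = sigmaFun n k) (hρ : ∀ k, ρ k = rhoFun n k) :
    ∀ τ : Equiv.Perm ℕ, ¬ ConditionC n σ ρ τ := by
  rintro τ ⟨hord, hτn, hfix, hrel⟩
  have hn6 : 6 ≤ n := by omega
  -- τ is an involution
  have hτ2 : τ * τ = 1 := by
    have h := pow_orderOf_eq_one τ
    rw [hord, sq] at h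
    exact h
  have hττ : ∀ x, τ (τ x) = x := by
    intro x
    have := congrArg (fun π : Equiv.Perm ℕ => π x) hτ2
    simpa [Equiv.Perm.mul_apply] using this
  have hτ0 : τ 0 = 0 := hfix 0 (Or.inl rfl)
  have hτm : τ (n - 1) = n := by
    have h := hττ n
    rw [hτn] at h
    exact h
  -- τ preserves {1,...,n-2}
  have hτrange : ∀ x, 1 ≤ x → x ≤ n - 2 → 1 ≤ τ x ∧ τ x ≤ n - 2 := by
    intro x hx1 hx2
    have h1 : τ x ≠ 0 := by
      intro h
      have := hττ x
      rw [h, hτ0] at this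
      omega
    have h2 : τ x ≤ n := by
      by_contra hc
      push_neg at hc
      have := hfix (τ x) (Or.inr hc)
      have h3 := hττ x
      rw [this] at h3
      omega
    have h3 : τ x ≠ n := by
      intro h
      have h4 := hττ x
      rw [h, hτn] at h4
      omega
    have h4 : τ x ≠ n - 1 := by
      intro h
      have h5 := hττ x
      rw [h, hτm] at h5
      omega
    omega
  -- values of σ
  have hσ0 : σ 0 = 0 := by
    rw [hσ]; unfold sigmaFun; split_ifs <;> omega
  have hσfix : ∀ x, n ≤ x → σ x = x := by
    intro x hx
    rw [hσ]; unfold sigmaFun; split_ifs <;> omega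
  have hσmid : ∀ x, 1 ≤ x → x ≤ n - 2 → σ x = x + 1 := by
    intro x hx1 hx2
    rw [hσ]; unfold sigmaFun; split_ifs <;> omega
  have hσtop : σ (n - 1) = 1 := by
    rw [hσ]; unfold sigmaFun; split_ifs <;> omega
  -- values of ρ
  have hρ0 : ρ 0 = 0 := by
    rw [hρ]; unfold rhoFun; split_ifs <;> omega
  have hρfix : ∀ x, n < x → ρ x = x := by
    intro x hx
    rw [hρ]; unfold rhoFun; split_ifs <;> omega
  have hρmid : ∀ x, 1 ≤ x → x ≤ n - 2 → ρ x = n - 1 - x := by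
    intro x hx1 hx2
    rw [hρ]; unfold rhoFun; split_ifs <;> omega
  have hρm : ρ (n - 1) = n := by
    rw [hρ]; unfold rhoFun; split_ifs <;> omega
  have hρn : ρ n = n - 1 := by
    rw [hρ]; unfold rhoFun; split_ifs <;> omega
  -- powers of σ
  have hσpowfix : ∀ j x, x = 0 ∨ n ≤ x → (σ ^ j) x = x := by
    intro j
    induction j with
    | zero => intro x _; simp
    | succ j ih =>
        intro x hx
        rw [pow_succ, Equiv.Perm.mul_apply]
        have hσx : σ x = x := by
          rcases hx with h | h
          · rw [h, hσ0]
          · exact hσfix x h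
        rw [hσx, ih x hx]
  have hσpow : ∀ j x, 1 ≤ x → x ≤ n - 1 → (σ ^ j) x = (x - 1 + j) % (n - 1) + 1 := by
    intro j
    induction j with
    | zero =>
        intro x hx1 hx2
        simp only [pow_zero, Equiv.Perm.one_apply]
        rw [Nat.add_zero, Nat.mod_eq_of_lt (by omega)]
        omega
    | succ j ih =>
        intro x hx1 hx2
        rw [pow_succ, Equiv.Perm.mul_apply]
        rcases Nat.lt_or_ge x (n - 1) with h | h
        · rw [hσmid x hx1 (by omega), ih (x + 1) (by omega) (by omega)]
          congr 2
          omega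
        · have hx : x = n - 1 := by omega
          rw [hx, hσtop, ih 1 le_rfl (by omega)]
          have h1 : n - 1 - 1 + (j + 1) = (n - 1) + j := by omega
          rw [h1, Nat.add_mod_left]
          norm_num
  -- the key identity (★): τ((n-1) - τ((n-1) - a)) = (n-1) - τ(a)
  have hstar : ∀ a, 1 ≤ a → a ≤ n - 2 → τ (n - 1 - τ (n - 1 - a)) = n - 1 - τ a := by
    intro a ha1 ha2
    obtain ⟨hk1, hk2⟩ := hτrange a ha1 ha2
    set k := τ a with hkdef
    have hτk : τ k = a := hττ a
    have hρa : ρ (τ k) = n - 1 - a := by rw [hτk]; exact hρmid a ha1 ha2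
    obtain ⟨hb1, hb2⟩ := hτrange (n - 1 - a) (by omega) (by omega)
    set b := τ (n - 1 - a) with hbdef
    have hb : τ (ρ (τ k)) = b := by rw [hρa]
    have hR := hrel k hk1 hk2
    rw [hb, hτk] at hR
    -- apply both sides to z = n - 1 - b
    have hz := congrArg (fun π : Equiv.Perm ℕ => π (n - 1 - b)) hR
    simp only [Equiv.Perm.mul_apply] at hz
    obtain ⟨hy1, hy2⟩ := hτrange (n - 1 - b) (by omega) (by omega)
    set y := τ (n - 1 - b) with hydef
    -- RHS value: σ^b (n-1-b) = n-1, τ(n-1) = n, σ^a n = n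
    have hRHS : (σ ^ a) (τ ((σ ^ b) (n - 1 - b))) = n := by
      rw [hσpow b (n - 1 - b) (by omega) (by omega)]
      have h1 : (n - 1 - b - 1 + b) % (n - 1) + 1 = n - 1 := by
        rw [Nat.mod_eq_of_lt (by omega)]
        omega
      rw [h1, hτm]
      exact hσpowfix a n (Or.inr le_rfl)
    -- LHS value
    rw [hσpow k y hy1 (by omega), hRHS] at hz
    -- hz : τ ((y - 1 + k) % (n-1) + 1) = n
    have harg : (y - 1 + k) % (n - 1) + 1 = n - 1 := by
      have h1 : τ ((y - 1 + k) % (n - 1) + 1) = τ (n - 1) := by rw [hz, hτm]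
      exact τ.injective h1
    have hmod2 : (y - 1 + k) % (n - 1) = y - 1 + k ∨
        (y - 1 + k) % (n - 1) = y - 1 + k - (n - 1) := by
      rcases Nat.lt_or_ge (y - 1 + k) (n - 1) with h | h
      · exact Or.inl (Nat.mod_eq_of_lt h)
      · right
        rw [Nat.mod_eq_sub_mod h, Nat.mod_eq_of_lt (by omega)]
    -- conclude y = n - 1 - k
    rcases hmod2 with h | h <;> rw [h] at harg <;> omega
  -- the cube identity: (ρ ∘ τ)^3 = id on {0,...,n}
  have hcube : ∀ x : ℕ, x ≤ n → ρ (τ (ρ (τ (ρ (τ x))))) = x := by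
    intro x hx
    rcases Nat.eq_zero_or_pos x with h0 | hpos
    · rw [h0, hτ0, hρ0, hτ0, hρ0, hτ0, hρ0]
    rcases Nat.lt_or_ge x (n - 1) with hlt | hge
    · -- 1 ≤ x ≤ n - 2
      have hx2 : x ≤ n - 2 := by omega
      obtain ⟨hy1, hy2⟩ := hτrange x hpos hx2
      rw [hρmid (τ x) hy1 hy2]
      obtain ⟨hc1, hc2⟩ := hτrange (n - 1 - τ x) (by omega) (by omega)
      rw [hρmid (τ (n - 1 - τ x)) hc1 hc2]
      have h1 := hstar (τ x) hy1 hy2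
      rw [hττ x] at h1
      rw [h1]
      rw [hρmid (n - 1 - x) (by omega) (by omega)]
      omega
    · rcases Nat.eq_or_lt_of_le hge with h | h
      · -- x = n - 1
        rw [← h, hτm, hρn, hτm, hρn, hτm, hρn]
      · -- x = n
        have hxn : x = n := by omega
        rw [hxn, hτn, hρm, hτn, hρm, hτn, hρm]
  -- restrictions to Fin (n+1)
  have hτfix' : ∀ x, n < x → τ x = x := fun x hx => hfix x (Or.inr hx)
  have hσfix' : ∀ x, n < x → σ x = x := fun x hx => hσfix x (le_of_lt hx)
  set T := restrictPerm n τ hτfix' with hTdef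
  set S := restrictPerm n σ hσfix' with hSdef
  set R := restrictPerm n ρ hρfix with hRdef
  have hcoeT : ∀ x : Fin (n + 1), (T x : ℕ) = τ x := fun x => rfl
  have hcoeS : ∀ x : Fin (n + 1), (S x : ℕ) = σ x := fun x => rfl
  have hcoeR : ∀ x : Fin (n + 1), (R x : ℕ) = ρ x := fun x => rfl
  -- S^(n-1) = 1
  have hS1 : S ^ (n - 1) = 1 := by
    ext x
    rw [restrictPerm_pow_apply]
    simp only [Equiv.Perm.one_apply]
    rcases Nat.eq_zero_or_pos (x : ℕ) with h0 | hpos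
    · rw [h0]; exact hσpowfix (n - 1) 0 (Or.inl rfl)
    rcases Nat.lt_or_ge (x : ℕ) n with hlt | hge
    · rw [hσpow (n - 1) x hpos (by omega)]
      have h1 : (x : ℕ) - 1 + (n - 1) = (n - 1) + ((x : ℕ) - 1) := by omega
      rw [h1, Nat.add_mod_left, Nat.mod_eq_of_lt (by omega)]
      omega
    · exact hσpowfix (n - 1) x (Or.inr hge)
  have hεS : Equiv.Perm.sign S = 1 := by
    apply units_odd_pow_eq_one (k := n - 1) (by omega)
    rw [← map_pow, hS1, map_one]
  -- T^2 = 1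
  have hT1 : T * T = 1 := by
    ext x
    simp only [Equiv.Perm.mul_apply, Equiv.Perm.one_apply, hcoeT]
    exact hττ x
  have htT2 : Equiv.Perm.sign T * Equiv.Perm.sign T = 1 := by
    rw [← map_mul, hT1, map_one]
  -- the relation at k = 1, restricted
  have hrel1 := hrel 1 le_rfl (by omega)
  have hTST : T * S * T = S ^ (τ 1) * T * S ^ (τ (ρ (τ 1))) := by
    ext x
    have hpt := congrArg (fun π : Equiv.Perm ℕ => π (x : ℕ)) hrel1
    simp only [Equiv.Perm.mul_apply, pow_one] at hpt
    simp only [Equiv.Perm.mul_apply]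
    rw [hcoeT, hcoeS, hcoeT, restrictPerm_pow_apply, hcoeT, restrictPerm_pow_apply]
    exact hpt
  have htT : Equiv.Perm.sign T = 1 := by
    have h := congrArg Equiv.Perm.sign hTST
    simp only [map_mul, map_pow, hεS, one_pow, one_mul, mul_one] at h
    -- h : sign T * 1 * sign T = sign T  (after simp)
    -- extract
    rcases Int.units_eq_one_or (Equiv.Perm.sign T) with h1 | h1
    · exact h1
    · rw [h1] at h
      norm_num at h
  -- (R * T)^3 = 1
  have hRT3 : (R * T) ^ 3 = 1 := by
    ext x
    have h3 : (R * T) ^ 3 = R * T * (R * T) * (R * T) := by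
      rw [pow_succ, pow_succ, pow_one]
    rw [h3]
    simp only [Equiv.Perm.mul_apply, Equiv.Perm.one_apply, hcoeR, hcoeT]
    exact hcube x (by omega)
  have hsignRT : Equiv.Perm.sign (R * T) = 1 := by
    apply units_odd_pow_eq_one (k := 3) (by norm_num)
    rw [← map_pow, hRT3, map_one]
  have hsignR : Equiv.Perm.sign R = 1 := by
    rw [map_mul, htT, mul_one] at hsignRT
    exact hsignRT
  -- Now compute sign R directly: it must be -1.
  -- R is an involution
  have hR2 : R ^ 2 = 1 := by
    ext x
    rw [sq]
    simp only [Equiv.Perm.mul_apply, Equiv.Perm.one_apply, hcoeR]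
    have hx : (x : ℕ) ≤ n := by omega
    rcases Nat.eq_zero_or_pos (x : ℕ) with h0 | hpos
    · rw [h0, hρ0, hρ0]
    rcases Nat.lt_or_ge (x : ℕ) (n - 1) with hlt | hge
    · rw [hρmid x hpos (by omega), hρmid (n - 1 - x) (by omega) (by omega)]
      omega
    · rcases Nat.eq_or_lt_of_le hge with h | h
      · rw [← h, hρm, hρn]
      · have hxn : (x : ℕ) = n := by omega
        rw [hxn, hρn, hρm]
  have hRne : R ≠ 1 := by
    intro h
    have hx : (n : ℕ) < n + 1 := by omega
    have := congrArg (fun π : Equiv.Perm (Fin (n + 1)) => ((π ⟨n, hx⟩ : Fin (n + 1)) : ℕ)) h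
    simp only [Equiv.Perm.one_apply] at this
    rw [hcoeR] at this
    simp only at this
    rw [hρn] at this
    omega
  have hordR : orderOf R = 2 := orderOf_eq_prime hR2 hRne
  -- all cycle lengths of R are 2
  have hcyc2 : ∀ c ∈ R.cycleType, c = 2 := by
    intro c hc
    have h1 : c ∣ 2 := by
      have := Multiset.dvd_lcm hc
      rwa [Equiv.Perm.lcm_cycleType, hordR] at this
    have h2 : 2 ≤ c := Equiv.Perm.two_le_of_mem_cycleType hc
    have h3 : c ≤ 2 := Nat.le_of_dvd (by norm_num) h1
    omega
  -- support of R is everything except 0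
  have hsupp : R.support = Finset.univ.erase 0 := by
    ext x
    simp only [Equiv.Perm.mem_support, Finset.mem_erase, Finset.mem_univ, and_true]
    constructor
    · intro h hx0
      apply h
      apply Fin.ext
      rw [hcoeR, hx0]
      simp [hρ0]
    · intro hx0 h
      apply hx0
      have hval : ρ (x : ℕ) = (x : ℕ) := by
        have h2 := congrArg Fin.val h
        rwa [hcoeR] at h2
      have hx : (x : ℕ) ≤ n := by omega
      have hx0' : (x : ℕ) = 0 := by
        by_contra hne
        rcases Nat.lt_or_ge (x : ℕ) (n - 1) with hlt | hge
        · rw [hρmid x (by omega) (by omega)] at hval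
          omega
        · rcases Nat.eq_or_lt_of_le hge with heq | hgt
          · rw [← heq, hρm] at hval
            omega
          · have hxn : (x : ℕ) = n := by omega
            rw [hxn, hρn] at hval
            omega
      exact Fin.ext (by simp [hx0'])
  have hsuppcard : R.support.card = n := by
    rw [hsupp, Finset.card_erase_of_mem (Finset.mem_univ 0), Finset.card_univ,
      Fintype.card_fin]
    omega
  -- cycleType is replicate (n/2) 2
  have hsum : R.cycleType.sum = n := by
    rw [Equiv.Perm.sum_cycleType, hsuppcard]
  have hcard : 2 * Multiset.card R.cycleType = n := by
    have h1 : R.cycleType = Multiset.replicate (Multiset.card R.cycleType) 2 := by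
      rw [Multiset.eq_replicate]
      exact ⟨rfl, hcyc2⟩
    have h2 := hsum
    rw [h1, Multiset.sum_replicate, smul_eq_mul] at h2
    omega
  have hsignR' : Equiv.Perm.sign R = -1 := by
    rw [Equiv.Perm.sign_of_cycleType, hsum]
    have hodd : (n + Multiset.card R.cycleType) % 2 = 1 := by omega
    obtain ⟨q, hq⟩ : ∃ q, n + Multiset.card R.cycleType = 2 * q + 1 :=
      ⟨(n + Multiset.card R.cycleType) / 2, by omega⟩
    rw [hq, pow_succ, pow_mul]
    norm_num
  rw [hsignR] at hsignR'
  exact absurd hsignR' (by decide)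
end

section
/- If τ ∈ S_n satisfies condition (C), then τρτ = ρτρ; consequently the subgroup ⟨ρ,τ⟩ of S_n equals {Id, ρ, τ, ρτ, τρ, ρτρ} and has at most 6 elements. -/
/-- Auxiliary: `σ` fixes `n`, hence so does every power. -/
lemma sigma_pow_fix_n (n : ℕ) (hn : 2 ≤ n) (σ : Equiv.Perm ℕ)
    (hσ : ∀ k, σ k = sigmaFun n k) : ∀ i : ℕ, (σ ^ i) n = n := by
  have h1 : σ n = n := by
    rw [hσ]; unfold sigmaFun
    rw [if_neg (by omega), if_neg (by omega)]
  intro i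
  induction i with
  | zero => simp
  | succ i ih => rw [pow_succ, Equiv.Perm.mul_apply, h1, ih]

/-- Auxiliary: shifting inside the cycle. -/
lemma sigma_pow_add (n : ℕ) (σ : Equiv.Perm ℕ)
    (hσ : ∀ k, σ k = sigmaFun n k) :
    ∀ i j : ℕ, 1 ≤ j → j + i ≤ n - 1 → (σ ^ i) j = j + i := by
  intro i
  induction i with
  | zero => intro j _ _; simp
  | succ i ih =>
    intro j hj1 hj2
    have hσj : σ j = j + 1 := by
      rw [hσ]; unfold sigmaFun
      rw [if_pos ⟨hj1, by omega⟩]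
    rw [pow_succ, Equiv.Perm.mul_apply, hσj]
    have := ih (j + 1) (by omega) (by omega)
    rw [this]; omega

/-- Auxiliary: reaching `n-1`. -/
lemma sigma_pow_top (n : ℕ) (σ : Equiv.Perm ℕ)
    (hσ : ∀ k, σ k = sigmaFun n k) :
    ∀ b : ℕ, 1 ≤ b → b ≤ n - 2 → (σ ^ b) (n - 1 - b) = n - 1 := by
  intro b hb1 hb2
  have := sigma_pow_add n σ hσ b (n - 1 - b) (by omega) (by omega)
  rw [this]; omega

/-- If `τ ∈ S_n` satisfies condition (C), then `τρτ = ρτρ`; consequently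
`⟨ρ,τ⟩ = {Id, ρ, τ, ρτ, τρ, ρτρ}`, which has at most 6 elements. -/
theorem braid_of_conditionC (n : ℕ) (hn : 2 ≤ n) (σ ρ τ : Equiv.Perm ℕ)
    (hσ : ∀ k, σ k = sigmaFun n k) (hρ : ∀ k, ρ k = rhoFun n k)
    (hC : ConditionC n σ ρ τ) :
    τ * ρ * τ = ρ * τ * ρ ∧
    ((Subgroup.closure ({ρ, τ} : Set (Equiv.Perm ℕ)) : Subgroup (Equiv.Perm ℕ)) :
        Set (Equiv.Perm ℕ)) = {1, ρ, τ, ρ * τ, τ * ρ, ρ * τ * ρ} ∧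
    Nat.card (Subgroup.closure ({ρ, τ} : Set (Equiv.Perm ℕ))) ≤ 6 := by
  obtain ⟨hord, hτn, hτfix, hcond⟩ := hC
  -- basic facts about τ
  have hττ : τ * τ = 1 := by
    have := pow_orderOf_eq_one τ
    rw [hord] at this
    rwa [pow_two] at this
  have hτinv : ∀ x, τ (τ x) = x := by
    intro x
    have : (τ * τ) x = (1 : Equiv.Perm ℕ) x := by rw [hττ]
    simpa [Equiv.Perm.mul_apply] using this
  have hτn1 : τ (n - 1) = n := by
    have := hτinv n
    rw [hτn] at this; exact this
  have hτ0 : τ 0 = 0 := hτfix 0 (Or.inl rfl)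
  -- τ preserves {1,...,n-2}
  have hτrange : ∀ x, 1 ≤ x → x ≤ n - 2 → 1 ≤ τ x ∧ τ x ≤ n - 2 := by
    intro x hx1 hx2
    have h0 : τ x ≠ 0 := by
      intro h
      have : x = 0 := by
        have := hτinv x
        rw [h, hτ0] at this; omega
      omega
    have hle : τ x ≤ n := by
      by_contra h
      have := hτfix (τ x) (Or.inr (by omega))
      have h2 := hτinv x
      rw [this] at h2
      omega
    have hne1 : τ x ≠ n - 1 := by
      intro h
      have := hτinv x
      rw [h, hτn1] at this
      omega
    have hne2 : τ x ≠ n := by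
      intro h
      have := hτinv x
      rw [h, hτn] at this
      omega
    omega
  -- facts about ρ
  have hρmid : ∀ x, 1 ≤ x → x ≤ n - 2 → ρ x = n - 1 - x := by
    intro x hx1 hx2
    rw [hρ]; unfold rhoFun; rw [if_pos ⟨hx1, hx2⟩]
  have hρn1 : ρ (n - 1) = n := by
    rw [hρ]; unfold rhoFun
    rw [if_neg (by omega), if_pos rfl]
  have hρn : ρ n = n - 1 := by
    rw [hρ]; unfold rhoFun
    rw [if_neg (by omega), if_neg (by omega), if_pos rfl]
  have hρ0 : ρ 0 = 0 := by
    rw [hρ]; unfold rhoFun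
    rw [if_neg (by omega), if_neg (by omega), if_neg (by omega)]
  have hρbig : ∀ k, n < k → ρ k = k := by
    intro k hk
    rw [hρ]; unfold rhoFun
    rw [if_neg (by omega), if_neg (by omega), if_neg (by omega)]
  have hρρ : ρ * ρ = 1 := by
    ext k
    rw [Equiv.Perm.mul_apply, Equiv.Perm.one_apply]
    rcases (show k = 0 ∨ (1 ≤ k ∧ k ≤ n - 2) ∨ k = n - 1 ∨ k = n ∨ n < k by omega) with
      h | ⟨h1, h2⟩ | h | h | h
    · rw [h, hρ0, hρ0]
    · rw [hρmid k h1 h2, hρmid (n - 1 - k) (by omega) (by omega)]; omega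
    · rw [h, hρn1, hρn]
    · rw [h, hρn, hρn1]
    · rw [hρbig k h, hρbig k h]
  -- the braid relation
  have hbr : τ * ρ * τ = ρ * τ * ρ := by
    ext k
    simp only [Equiv.Perm.mul_apply]
    rcases (show k = 0 ∨ (1 ≤ k ∧ k ≤ n - 2) ∨ k = n - 1 ∨ k = n ∨ n < k by omega) with
      h | ⟨h1, h2⟩ | h | h | h
    · rw [h]; simp only [hτ0, hρ0]
    · -- main case
      obtain ⟨ha1, ha2⟩ := hτrange k h1 h2
      obtain ⟨hb1, hb2⟩ := hτrange (n - 1 - τ k) (by omega) (by omega)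
      obtain ⟨hy1, hy2⟩ := hτrange (n - 1 - k) (by omega) (by omega)
      -- apply condition C at the point y = τ (n-1-k)
      have heq := hcond k h1 h2
      have hpt : (τ * σ ^ k * τ) (τ (n - 1 - k))
          = (σ ^ (τ k) * τ * σ ^ (τ (ρ (τ k)))) (τ (n - 1 - k)) := by rw [heq]
      simp only [Equiv.Perm.mul_apply] at hpt
      rw [hρmid (τ k) ha1 ha2, hτinv (n - 1 - k),
        sigma_pow_top n σ hσ k h1 h2, hτn1] at hpt
      -- peel the RHS
      have hstep1 : τ ((σ ^ (τ (n - 1 - τ k))) (τ (n - 1 - k))) = n := by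
        refine (σ ^ (τ k)).injective ?_
        rw [sigma_pow_fix_n n hn σ hσ (τ k)]
        exact hpt.symm
      have hstep2 : (σ ^ (τ (n - 1 - τ k))) (τ (n - 1 - k)) = n - 1 := by
        refine τ.injective ?_
        rw [hτn1]
        exact hstep1
      have hstep3 : τ (n - 1 - k) = n - 1 - τ (n - 1 - τ k) := by
        refine (σ ^ (τ (n - 1 - τ k))).injective ?_
        rw [sigma_pow_top n σ hσ _ hb1 hb2]
        exact hstep2
      -- conclude: τ (ρ (τ k)) = ρ (τ (ρ k))
      rw [hρmid (τ k) ha1 ha2, hρmid k h1 h2,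
        hρmid (τ (n - 1 - k)) hy1 hy2, hstep3]
      omega
    · rw [h]; simp only [hτn1, hρn, hτn, hρn1]
    · rw [h]; simp only [hτn, hρn1, hτn1, hρn]
    · simp only [hτfix k (Or.inr h), hρbig k h]
  refine ⟨hbr, ?_⟩
  -- now the subgroup computation
  set S : Set (Equiv.Perm ℕ) := {1, ρ, τ, ρ * τ, τ * ρ, ρ * τ * ρ} with hSdef
  have h1ρ : ∀ g : Equiv.Perm ℕ, ρ * (ρ * g) = g := fun g => by
    rw [← mul_assoc, hρρ, one_mul]
  have h1τ : ∀ g : Equiv.Perm ℕ, τ * (τ * g) = g := fun g => by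
    rw [← mul_assoc, hττ, one_mul]
  have hbr' : τ * (ρ * τ) = ρ * (τ * ρ) := by
    rw [← mul_assoc, ← mul_assoc, hbr]
  have hbr'' : ∀ g : Equiv.Perm ℕ, τ * (ρ * (τ * g)) = ρ * (τ * (ρ * g)) := fun g => by
    rw [← mul_assoc, ← mul_assoc, ← mul_assoc, ← mul_assoc, hbr]
  have hmul : ∀ x ∈ S, ∀ y ∈ S, x * y ∈ S := by
    intro x hx y hy
    simp only [hSdef, Set.mem_insert_iff, Set.mem_singleton_iff] at hx hy ⊢
    rcases hx with rfl | rfl | rfl | rfl | rfl | rfl <;>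
      rcases hy with rfl | rfl | rfl | rfl | rfl | rfl <;>
      simp [mul_assoc, hρρ, hττ, h1ρ, h1τ, hbr', hbr'']
  have hinv : ∀ x ∈ S, x⁻¹ ∈ S := by
    have i1 : ρ⁻¹ = ρ := inv_eq_of_mul_eq_one_right hρρ
    have i2 : τ⁻¹ = τ := inv_eq_of_mul_eq_one_right hττ
    have i3 : (ρ * τ)⁻¹ = τ * ρ := inv_eq_of_mul_eq_one_right (by
      simp [mul_assoc, h1ρ, h1τ, hττ, hρρ])
    have i4 : (τ * ρ)⁻¹ = ρ * τ := inv_eq_of_mul_eq_one_right (by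
      simp [mul_assoc, h1ρ, h1τ, hττ, hρρ])
    have i5 : (ρ * τ * ρ)⁻¹ = ρ * τ * ρ := inv_eq_of_mul_eq_one_right (by
      simp [mul_assoc, h1ρ, h1τ, hττ, hρρ])
    intro x hx
    simp only [hSdef, Set.mem_insert_iff, Set.mem_singleton_iff] at hx ⊢
    rcases hx with rfl | rfl | rfl | rfl | rfl | rfl <;>
      simp [i1, i2, i3, i4, i5]
  set K : Subgroup (Equiv.Perm ℕ) :=
    { carrier := S
      one_mem' := by simp [hSdef]
      mul_mem' := fun hx hy => hmul _ hx _ hy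
      inv_mem' := fun hx => hinv _ hx } with hKdef
  have hρmem : ρ ∈ Subgroup.closure ({ρ, τ} : Set (Equiv.Perm ℕ)) :=
    Subgroup.subset_closure (Set.mem_insert _ _)
  have hτmem : τ ∈ Subgroup.closure ({ρ, τ} : Set (Equiv.Perm ℕ)) :=
    Subgroup.subset_closure (Set.mem_insert_of_mem _ rfl)
  have hle : Subgroup.closure ({ρ, τ} : Set (Equiv.Perm ℕ)) ≤ K := by
    rw [Subgroup.closure_le]
    intro g hg
    have hg' : g = ρ ∨ g = τ := by simpa using hg
    have : g ∈ S := by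
      rcases hg' with rfl | rfl <;> simp [hSdef]
    exact this
  have hge : S ⊆ (Subgroup.closure ({ρ, τ} : Set (Equiv.Perm ℕ)) : Set (Equiv.Perm ℕ)) := by
    intro x hx
    simp only [hSdef, Set.mem_insert_iff, Set.mem_singleton_iff] at hx
    rcases hx with rfl | rfl | rfl | rfl | rfl | rfl
    · exact Subgroup.one_mem _
    · exact hρmem
    · exact hτmem
    · exact Subgroup.mul_mem _ hρmem hτmem
    · exact Subgroup.mul_mem _ hτmem hρmem
    · exact Subgroup.mul_mem _ (Subgroup.mul_mem _ hρmem hτmem) hρmem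
  have hset : ((Subgroup.closure ({ρ, τ} : Set (Equiv.Perm ℕ))) : Set (Equiv.Perm ℕ)) = S :=
    Set.Subset.antisymm (fun x hx => hle hx) hge
  refine ⟨hset, ?_⟩
  -- cardinality bound
  have hcard : Nat.card (Subgroup.closure ({ρ, τ} : Set (Equiv.Perm ℕ))) = S.ncard := by
    rw [← Nat.card_coe_set_eq, ← hset]
    rfl
  rw [hcard]
  have hstep : ∀ (a : Equiv.Perm ℕ) (s : Set (Equiv.Perm ℕ)) (m : ℕ),
      s.ncard ≤ m → (insert a s).ncard ≤ m + 1 := by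
    intro a s m h
    exact le_trans (Set.ncard_insert_le a s) (by omega)
  have h6 : S.ncard ≤ 6 := by
    rw [hSdef]
    refine hstep _ _ 5 (hstep _ _ 4 (hstep _ _ 3 (hstep _ _ 2 (hstep _ _ 1 ?_))))
    simp [Set.ncard_singleton]
  exact h6
end
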